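/- arXiv:1109.3381 — 8 statements merged into one kernel-verified Lean document; each statement's English description precedes it below -/
import Mathlib

section
/- For every n ≥ 1, the number of aperiodic transformations of a set of n elements equals (n+1)^(n-1); that is, the cardinality of the set of functions t : Fin n → Fin n such that for every x : Fin n and every k ≥ 1, t iterated k times applied to x equals x only if t x = x, is (n+1)^(n-1). -/
/-- A transformation of `Fin n` is aperiodic if it contains no cycles of length
greater than 1: for every `x` and every `k ≥ 1`, `t^[k] x = x` implies `t x = x`. -/
def Aperiodic' {n : ℕ} (t : Fin n → Fin n) : Prop :=
  ∀ (x : Fin n) (k : ℕ), 1 ≤ k → t^[k] x = x → t x = x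


namespace APC

variable {V R V' R' : Type*}

/-- one step of the parent map, roots (R) are absorbing -/
def steps (p : V → V ⊕ R) : V ⊕ R → V ⊕ R := Sum.elim p Sum.inr

/-- v eventually reaches a root -/
inductive Rch (p : V → V ⊕ R) : V → Prop
  | base {v : V} {r : R} : p v = Sum.inr r → Rch p v
  | step {v w : V} : p v = Sum.inl w → Rch p w → Rch p v

def Good (p : V → V ⊕ R) : Prop := ∀ v, Rch p v

noncomputable def F (n k : ℕ) : ℕ := Nat.card {p : Fin n → Fin n ⊕ Fin k // Good p}

lemma rch_map (e : V ≃ V') (f : R ≃ R') {p : V → V ⊕ R} {v : V} (h : Rch p v) :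
    Rch (fun v' => Sum.map e f (p (e.symm v'))) (e v) := by
  induction h with
  | @base v r hv => exact Rch.base (r := f r) (by simp [hv])
  | @step v w hv _ ih => exact Rch.step (w := e w) (by simp [hv]) ih

lemma good_map_iff (e : V ≃ V') (f : R ≃ R') (p : V → V ⊕ R) :
    Good (fun v' => Sum.map e f (p (e.symm v'))) ↔ Good p := by
  constructor
  · intro h v
    have := rch_map e.symm f.symm (h (e v))
    simp only [Equiv.symm_symm, Equiv.symm_apply_apply] at this
    have he : (fun v' => Sum.map e.symm f.symm (Sum.map (⇑e) (⇑f) (p v'))) = p := by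
      funext x; cases h' : p x <;> simp [h']
    rwa [he] at this
  · intro h v'
    have := rch_map e f (h (e.symm v'))
    simpa using this

noncomputable def goodEquiv (e : V ≃ V') (f : R ≃ R') :
    {p : V → V ⊕ R // Good p} ≃ {p : V' → V' ⊕ R' // Good p} :=
  (Equiv.subtypeEquiv (Equiv.arrowCongr e (Equiv.sumCongr e f))
    (by intro p; exact (good_map_iff e f p).symm))

lemma card_good_eq (e : V ≃ V') (f : R ≃ R') :
    Nat.card {p : V → V ⊕ R // Good p} = Nat.card {p : V' → V' ⊕ R' // Good p} :=
  Nat.card_eq_of_bijective _ (goodEquiv e f).bijective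

section Decomp
variable [Fintype V] [DecidableEq V]

def Jset (p : V → V ⊕ R) : Finset V := Finset.univ.filter (fun v => (p v).isRight)

lemma mem_Jset {p : V → V ⊕ R} {v : V} : v ∈ Jset p ↔ (p v).isRight := by
  simp [Jset]

/-- target of decomposition -/
def T (V R : Type*) [Fintype V] [DecidableEq V] : Type _ :=
  Σ J : Finset V, (↥J → R) × {q : ↥(Jᶜ) → ↥(Jᶜ) ⊕ ↥J // Good q}

def pOf (J : Finset V) (f : ↥J → R) (q : ↥(Jᶜ) → ↥(Jᶜ) ⊕ ↥J) : V → V ⊕ R :=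
  fun v => if h : v ∈ J then Sum.inr (f ⟨v, h⟩)
    else Sum.inl (Sum.elim Subtype.val Subtype.val (q ⟨v, Finset.mem_compl.mpr h⟩))

lemma rch_pOf_aux {J : Finset V} {f : ↥J → R} {q : ↥(Jᶜ) → ↥(Jᶜ) ⊕ ↥J}
    {u : ↥(Jᶜ)} (h : Rch q u) : Rch (pOf J f q) u.val := by
  induction h with
  | @base u w hw =>
    have hu : u.val ∉ J := Finset.mem_compl.mp u.2
    refine Rch.step (w := w.val) ?_ (Rch.base (r := f w) (by simp [pOf, w.2]))
    simp [pOf, hu, Subtype.coe_eta, hw]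
  | @step u w hw _ ih =>
    have hu : u.val ∉ J := Finset.mem_compl.mp u.2
    refine Rch.step (w := w.val) ?_ ih
    simp [pOf, hu, Subtype.coe_eta, hw]

lemma good_pOf {J : Finset V} {f : ↥J → R} {q : ↥(Jᶜ) → ↥(Jᶜ) ⊕ ↥J}
    (hq : Good q) : Good (pOf J f q) := by
  intro v
  by_cases h : v ∈ J
  · exact Rch.base (r := f ⟨v, h⟩) (by simp [pOf, h])
  · exact rch_pOf_aux (hq ⟨v, Finset.mem_compl.mpr h⟩)

noncomputable def bwd (x : T V R) : {p : V → V ⊕ R // Good p} :=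
  ⟨pOf x.1 x.2.1 x.2.2.val, good_pOf x.2.2.2⟩


def toSum (p : V → V ⊕ R) (w : V) : ↥((Jset p)ᶜ) ⊕ ↥(Jset p) :=
  if hw : w ∈ Jset p then Sum.inr ⟨w, hw⟩ else Sum.inl ⟨w, Finset.mem_compl.mpr hw⟩

lemma isLeft_of_mem_compl {p : V → V ⊕ R} {v : V} (h : v ∈ (Jset p)ᶜ) :
    (p v).isLeft :=
  Sum.not_isRight.mp (fun hr => Finset.mem_compl.mp h (mem_Jset.mpr hr))

def qOf (p : V → V ⊕ R) (u : ↥((Jset p)ᶜ)) : ↥((Jset p)ᶜ) ⊕ ↥(Jset p) :=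
  toSum p ((p u.val).getLeft (isLeft_of_mem_compl u.2))

def fOf (p : V → V ⊕ R) (u : ↥(Jset p)) : R :=
  (p u.val).getRight (mem_Jset.mp u.2)

lemma p_eq_inr {p : V → V ⊕ R} (u : ↥(Jset p)) : p u.val = Sum.inr (fOf p u) :=
  (Sum.inr_getRight _ _).symm

lemma qOf_eq {p : V → V ⊕ R} {u : ↥((Jset p)ᶜ)} {w : V} (h : p u.val = Sum.inl w) :
    qOf p u = toSum p w := by
  unfold qOf
  congr 1
  simp [h]

lemma good_qOf {p : V → V ⊕ R} (hp : Good p) : Good (qOf p) := by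
  have aux : ∀ v : V, Rch p v → ∀ h : v ∈ (Jset p)ᶜ, Rch (qOf p) ⟨v, h⟩ := by
    intro v hv
    induction hv with
    | @base v r hr =>
      intro h
      exact absurd (mem_Jset.mpr (by simp [hr])) (Finset.mem_compl.mp h)
    | @step v w hw _ ih =>
      intro h
      by_cases hwJ : w ∈ Jset p
      · exact Rch.base (r := ⟨w, hwJ⟩) (by rw [qOf_eq (u := ⟨v, h⟩) hw, toSum, dif_pos hwJ])
      · refine Rch.step (w := ⟨w, Finset.mem_compl.mpr hwJ⟩) ?_ (ih _)
        rw [qOf_eq (u := ⟨v, h⟩) hw, toSum, dif_neg hwJ]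
  exact fun u => Subtype.coe_eta u u.2 ▸ aux u.val (hp u.val) u.2

lemma bwd_surjective : Function.Surjective (bwd (V := V) (R := R)) := by
  rintro ⟨p, hp⟩
  refine ⟨⟨Jset p, fOf p, ⟨qOf p, good_qOf hp⟩⟩, ?_⟩
  apply Subtype.ext
  funext v
  show pOf (Jset p) (fOf p) (qOf p) v = p v
  by_cases h : v ∈ Jset p
  · rw [pOf, dif_pos h]
    exact (p_eq_inr ⟨v, h⟩).symm
  · rw [pOf, dif_neg h]
    have hL := isLeft_of_mem_compl (p := p) (v := v) (Finset.mem_compl.mpr h)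
    obtain ⟨w, hw⟩ := Sum.isLeft_iff.mp hL
    rw [qOf_eq (u := ⟨v, Finset.mem_compl.mpr h⟩) hw, hw, toSum]
    split <;> rfl

lemma bwd_injective : Function.Injective (bwd (V := V) (R := R)) := by
  rintro ⟨J1, f1, q1, hq1⟩ ⟨J2, f2, q2, hq2⟩ h
  have hpq : pOf J1 f1 q1 = pOf J2 f2 q2 := congrArg Subtype.val h
  have hJ : J1 = J2 := by
    ext v
    constructor
    · intro hv
      by_contra hv2
      have := congrFun hpq v
      rw [pOf, dif_pos hv, pOf, dif_neg hv2] at this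
      exact nomatch this
    · intro hv
      by_contra hv2
      have := congrFun hpq v
      rw [pOf, dif_neg hv2, pOf, dif_pos hv] at this
      exact nomatch this
  subst hJ
  have hf : f1 = f2 := by
    funext u
    have := congrFun hpq u.val
    rw [pOf, dif_pos u.2, pOf, dif_pos u.2] at this
    simpa [Sum.inr.injEq, Subtype.coe_eta] using this
  have hq : q1 = q2 := by
    funext u
    have := congrFun hpq u.val
    have hu := Finset.mem_compl.mp u.2
    rw [pOf, dif_neg hu, pOf, dif_neg hu] at this
    simp only [Sum.inl.injEq, Subtype.coe_eta] at this
    cases h1 : q1 u with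
    | inl a => cases h2 : q2 u with
      | inl b =>
        rw [h1, h2] at this
        simp at this
        exact congrArg _ this
      | inr b =>
        rw [h1, h2] at this
        simp at this
        exact absurd (this ▸ b.2) (Finset.mem_compl.mp a.2)
    | inr a => cases h2 : q2 u with
      | inl b =>
        rw [h1, h2] at this
        simp at this
        exact absurd (this ▸ a.2) (Finset.mem_compl.mp b.2)
      | inr b =>
        rw [h1, h2] at this
        simp at this
        exact congrArg _ this
  subst hf; subst hq; rfl

lemma card_decomp :
    Nat.card {p : V → V ⊕ R // Good p} = Nat.card (T V R) :=
  (Nat.card_eq_of_bijective _ ⟨bwd_injective, bwd_surjective⟩).symm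

end Decomp

lemma nat_card_sigma {ι : Type*} [Fintype ι] (g : ι → Type*) [∀ i, Finite (g i)] :
    Nat.card (Σ i, g i) = ∑ i, Nat.card (g i) := by
  letI : ∀ i, Fintype (g i) := fun i => Fintype.ofFinite (g i)
  simp [Nat.card_eq_fintype_card, Fintype.card_sigma]

section Count
variable [Fintype V] [DecidableEq V] [Fintype R]

lemma card_T :
    Nat.card (T V R) =
      ∑ J : Finset V, (Fintype.card R) ^ J.card * F (Fintype.card V - J.card) J.card := by
  rw [T, nat_card_sigma]
  apply Finset.sum_congr rfl
  intro J _
  rw [Nat.card_prod, Nat.card_fun]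
  congr 1
  · rw [Nat.card_eq_fintype_card, Nat.card_eq_fintype_card, Fintype.card_coe]
  · rw [F]
    refine card_good_eq ?_ ?_
    · exact Fintype.equivFinOfCardEq (by rw [Fintype.card_coe, Finset.card_compl])
    · exact Fintype.equivFinOfCardEq (by rw [Fintype.card_coe])

end Count
lemma rch_empty [IsEmpty R] {p : V → V ⊕ R} {v : V} (h : Rch p v) : False := by
  induction h with
  | @base v r hr => exact IsEmpty.elim ‹_› r
  | step _ _ ih => exact ih

lemma F_succ_zero (n : ℕ) (hn : 1 ≤ n) : F n 0 = 0 := by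
  rw [F, Nat.card_eq_zero]
  exact Or.inl ⟨fun x => rch_empty (x.2 ⟨0, hn⟩)⟩

lemma F_zero (k : ℕ) : F 0 k = 1 := by
  rw [F]
  haveI : Unique {p : Fin 0 → Fin 0 ⊕ Fin k // Good p} :=
    ⟨⟨⟨fun v => v.elim0, fun v => v.elim0⟩⟩,
      fun a => Subtype.ext (funext fun v => v.elim0)⟩
  exact Nat.card_unique

lemma F_rec (n k : ℕ) :
    F n k = ∑ j ∈ Finset.range (n + 1), (n.choose j) * (k ^ j * F (n - j) j) := by
  have h1 : F n k = Nat.card (T (Fin n) (Fin k)) := card_decomp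
  rw [h1, card_T]
  have h2 : (Finset.univ : Finset (Finset (Fin n))) = (Finset.univ : Finset (Fin n)).powerset := by
    rw [Finset.powerset_univ]
  rw [h2]
  have h3 := Finset.sum_powerset_apply_card
    (fun m => (Fintype.card (Fin k)) ^ m * F (Fintype.card (Fin n) - m) m)
    (x := (Finset.univ : Finset (Fin n)))
  simp only [Fintype.card_fin, Finset.card_univ] at h3 ⊢
  rw [h3]
  simp [mul_comm, smul_eq_mul]

lemma key_id (m k : ℕ) :
    ∑ j ∈ Finset.range (m + 2), (m + 1).choose j * j * k ^ j * (m + 1) ^ (m + 1 - j) =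
      (m + 1) * k * (k + (m + 1)) ^ m := by
  rw [Finset.sum_range_succ']
  have hterm : ∀ i, (m + 1).choose (i + 1) * (i + 1) * k ^ (i + 1) * (m + 1) ^ (m + 1 - (i + 1)) =
      (m + 1) * k * (m.choose i * k ^ i * (m + 1) ^ (m - i)) := by
    intro i
    have h := Nat.add_one_mul_choose_eq m i
    have h' : (m + 1).choose (i + 1) * (i + 1) = (m + 1) * m.choose i := by
      simpa using h.symm
    have he : m + 1 - (i + 1) = m - i := by omega
    rw [he, h', pow_succ]
    ring
  simp only [hterm]
  rw [← Finset.mul_sum]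
  have hbin : ∑ i ∈ Finset.range (m + 1), m.choose i * k ^ i * (m + 1) ^ (m - i) =
      (k + (m + 1)) ^ m := by
    rw [add_pow]
    refine Finset.sum_congr rfl fun i _ => ?_
    simp only [Nat.cast_id]
    ring
  rw [hbin]
  simp

lemma F_eq : ∀ n, 1 ≤ n → ∀ k, F n k = k * (n + k) ^ (n - 1) := by
  intro n
  induction n using Nat.strong_induction_on with
  | _ n IH =>
    intro hn k
    obtain ⟨m, rfl⟩ : ∃ m, n = m + 1 := ⟨n - 1, by omega⟩
    have hmul : (m + 1) * F (m + 1) k = (m + 1) * k * (k + (m + 1)) ^ m := by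
      rw [mul_assoc]
      rw [← mul_assoc, F_rec, Finset.mul_sum, ← key_id]
      apply Finset.sum_congr rfl
      intro j hj
      rw [Finset.mem_range] at hj
      match j, hj with
      | 0, _ =>
        simp only [Nat.sub_zero]
        rw [F_succ_zero (m + 1) (by omega)]
        simp
      | j + 1, hj =>
        by_cases hjm : j < m
        · have h1 : 1 ≤ m - j := by omega
          have h2 : m - j < m + 1 := by omega
          have h3 : m + 1 - (j + 1) = m - j := by omega
          rw [h3, IH (m - j) h2 h1 (j + 1)]
          have h4 : m - j + (j + 1) = m + 1 := by omega
          rw [h4]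
          have h7 : (m + 1) ^ (m - j) = (m + 1) * (m + 1) ^ (m - j - 1) := by
            conv_lhs => rw [show m - j = (m - j - 1) + 1 from by omega]
            rw [pow_succ']
          rw [h7]
          ring
        · have hje : j = m := by omega
          subst hje
          simp [F_zero]
      -- done per-term
    rw [mul_assoc] at hmul
    have h9 := Nat.eq_of_mul_eq_mul_left (by omega : 0 < m + 1) hmul
    rw [h9, Nat.add_sub_cancel, add_comm k (m + 1)]
lemma rch_no_loop {p : V → V ⊕ R} {v : V} (h : Rch p v) : p v ≠ Sum.inl v := by
  induction h with
  | base h => simp [h]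
  | @step v w hvw _ ih =>
    intro hc
    rw [hvw, Sum.inl.injEq] at hc
    subst hc
    exact ih hvw

end APC

namespace APC
section Bridge
variable {n : ℕ}

def pT (t : Fin n → Fin n) : Fin n → Fin n ⊕ Fin 1 :=
  fun x => if t x = x then Sum.inr 0 else Sum.inl (t x)

def tP (p : Fin n → Fin n ⊕ Fin 1) : Fin n → Fin n :=
  fun x => Sum.elim id (fun _ => x) (p x)

lemma aperiodic_iff_reach (t : Fin n → Fin n) :
    Aperiodic' t ↔ ∀ x, ∃ i, t (t^[i] x) = t^[i] x := by
  constructor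
  · intro hT x
    have key : ∀ i j : ℕ, i < j → t^[i] x = t^[j] x →
        ∃ i', t (t^[i'] x) = t^[i'] x := by
      intro i j hij he
      refine ⟨i, hT (t^[i] x) (j - i) (by omega) ?_⟩
      rw [← Function.iterate_add_apply, show j - i + i = j from by omega]
      exact he.symm
    obtain ⟨i, j, hne, heq⟩ := Finite.exists_ne_map_eq_of_infinite (fun i : ℕ => t^[i] x)
    rcases Nat.lt_trichotomy i j with h | h | h
    · exact key i j h heq
    · exact absurd h hne
    · exact key j i h heq.symm
  · intro h x k hk hcyc
    obtain ⟨i, hi⟩ := h x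
    have hcm : ∀ c : ℕ, t^[c * k] x = x := by
      intro c
      induction c with
      | zero => simp
      | succ c ih =>
        rw [Nat.succ_mul, Function.iterate_add_apply, hcyc, ih]
    have hx : x = t^[i] x := by
      have h1 : t^[i * k] x = x := hcm i
      have h2 : i * k = (i * k - i) + i := by
        have : i ≤ i * k := Nat.le_mul_of_pos_right i (by omega)
        omega
      rw [h2, Function.iterate_add_apply, Function.iterate_fixed hi] at h1
      exact h1.symm
    rw [← hx] at hi
    exact hi

lemma rch_pT_iff (t : Fin n → Fin n) (x : Fin n) :
    Rch (pT t) x ↔ ∃ i, t (t^[i] x) = t^[i] x := by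
  constructor
  · intro h
    induction h with
    | @base v r hr =>
      by_cases hv : t v = v
      · exact ⟨0, by simpa using hv⟩
      · rw [pT, if_neg hv] at hr; exact nomatch hr
    | @step v w hvw _ ih =>
      by_cases hv : t v = v
      · exact ⟨0, by simpa using hv⟩
      · rw [pT, if_neg hv, Sum.inl.injEq] at hvw
        subst hvw
        obtain ⟨i, hi⟩ := ih
        exact ⟨i + 1, by rwa [Function.iterate_succ_apply]⟩
  · rintro ⟨i, hi⟩
    induction i generalizing x with
    | zero =>
      simp only [Function.iterate_zero, id] at hi
      exact Rch.base (r := 0) (by rw [pT, if_pos hi])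
    | succ i ih =>
      by_cases hv : t x = x
      · exact Rch.base (r := 0) (by rw [pT, if_pos hv])
      · refine Rch.step (w := t x) (by rw [pT, if_neg hv]) (ih (t x) ?_)
        rwa [Function.iterate_succ_apply] at hi

lemma good_pT_iff (t : Fin n → Fin n) : Good (pT t) ↔ Aperiodic' t := by
  rw [aperiodic_iff_reach]
  exact forall_congr' fun x => rch_pT_iff t x

lemma tP_pT (t : Fin n → Fin n) : tP (pT t) = t := by
  funext x
  by_cases h : t x = x
  · rw [tP, pT, if_pos h]; simpa using h.symm
  · rw [tP, pT, if_neg h]; rfl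

lemma pT_tP {p : Fin n → Fin n ⊕ Fin 1} (hp : Good p) : pT (tP p) = p := by
  funext x
  cases hpx : p x with
  | inl w =>
    have hw : w ≠ x := fun hc => rch_no_loop (hp x) (hc ▸ hpx)
    have htx : tP p x = w := by rw [tP, hpx]; rfl
    rw [pT, htx, if_neg hw]
  | inr r =>
    have htx : tP p x = x := by rw [tP, hpx]; rfl
    rw [pT, htx, if_pos rfl]
    congr
    exact Subsingleton.elim _ _

noncomputable def aperiodicEquiv :
    {t : Fin n → Fin n // Aperiodic' t} ≃ {p : Fin n → Fin n ⊕ Fin 1 // Good p} where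
  toFun t := ⟨pT t.val, (good_pT_iff t.val).mpr t.2⟩
  invFun p := ⟨tP p.val, by
    have h := (good_pT_iff (tP p.val)).mp
    rw [pT_tP p.2] at h
    exact h p.2⟩
  left_inv t := Subtype.ext (tP_pT t.val)
  right_inv p := Subtype.ext (pT_tP p.2)

theorem card_aperiodic' (hn : 1 ≤ n) :
    Nat.card {t : Fin n → Fin n // Aperiodic' t} = (n + 1) ^ (n - 1) := by
  rw [Nat.card_eq_of_bijective _ aperiodicEquiv.bijective]
  have : Nat.card {p : Fin n → Fin n ⊕ Fin 1 // Good p} = F n 1 := rfl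
  rw [this, F_eq n hn 1, one_mul]

end Bridge
end APC


/-- For every `n ≥ 1`, the number of aperiodic transformations of a set of `n`
elements equals `(n+1)^(n-1)`. -/
theorem card_aperiodic_transformations (n : ℕ) (hn : 1 ≤ n) :
    Nat.card {t : Fin n → Fin n // Aperiodic' t} = (n + 1) ^ (n - 1) :=
  APC.card_aperiodic' hn
end

section
/- Let n ≥ 1 and let M be a deterministic finite automaton (DFA) over a finite alphabet α with state type Fin n. If for every word w over α the transformation q ↦ M.evalFrom q w of Fin n is aperiodic, then the set of transformations { f : Fin n → Fin n | ∃ w ≠ [], f = fun q => M.evalFrom q w } has cardinality at most (n+1)^(n-1). -/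
namespace APC

variable {m : ℕ}

/-- The "leaves" of a parent function `f` relative to a vertex set `S`:
members of `S` which are not the image of any member of `S`. -/
def leaves (f : Fin m → Fin m) (S : Finset (Fin m)) : Finset (Fin m) :=
  S.filter (fun x => ∀ y ∈ S, f y ≠ x)

/-- Prüfer-style encoding: repeatedly remove the largest leaf, recording its parent. -/
def encode (f : Fin m → Fin m) (S : Finset (Fin m)) : List (Fin m) :=
  if h : 2 ≤ S.card ∧ (leaves f S).Nonempty then
    f ((leaves f S).max' h.2) :: encode f (S.erase ((leaves f S).max' h.2))
  else []
termination_by S.card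
decreasing_by
  exact Finset.card_erase_lt_of_mem (Finset.filter_subset _ _ ((leaves f S).max'_mem h.2))

lemma encode_of_cond {f : Fin m → Fin m} {S : Finset (Fin m)}
    (h : 2 ≤ S.card ∧ (leaves f S).Nonempty) :
    encode f S = f ((leaves f S).max' h.2) :: encode f (S.erase ((leaves f S).max' h.2)) := by
  rw [encode, dif_pos h]

lemma encode_of_not {f : Fin m → Fin m} {S : Finset (Fin m)}
    (h : ¬(2 ≤ S.card ∧ (leaves f S).Nonempty)) : encode f S = [] := by
  rw [encode, dif_neg h]

/-- If `f` has no cycles avoiding `r` and `r ∉ S`, then any nonempty `S` has a leaf. -/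
lemma exists_leaf {f : Fin m → Fin m} {r : Fin m} {S : Finset (Fin m)}
    (hnc : ∀ x, x ≠ r → ∀ k, 1 ≤ k → f^[k] x ≠ x)
    (hr : r ∉ S) (hS : S.Nonempty) : (leaves f S).Nonempty := by
  by_contra h
  rw [Finset.not_nonempty_iff_eq_empty] at h
  have hsurj : ∀ x ∈ S, ∃ y ∈ S, f y = x := by
    intro x hx
    by_contra hc
    push_neg at hc
    have : x ∈ leaves f S := Finset.mem_filter.mpr ⟨hx, hc⟩
    simp [h] at this
  have hsub : S ⊆ S.image f := by
    intro x hx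
    obtain ⟨y, hy, hfy⟩ := hsurj x hx
    exact Finset.mem_image.mpr ⟨y, hy, hfy⟩
  have heq : S = S.image f := Finset.eq_of_subset_of_card_le hsub (Finset.card_image_le)
  have hmaps : ∀ y ∈ S, f y ∈ S := by
    intro y hy
    rw [heq]
    exact Finset.mem_image_of_mem f hy
  obtain ⟨x, hx⟩ := hS
  have hiter : ∀ k, f^[k] x ∈ S := by
    intro k
    induction k with
    | zero => simpa
    | succ k ih => rw [Function.iterate_succ_apply']; exact hmaps _ ih
  obtain ⟨i, -, j, -, hij, hfij⟩ :=
    Finset.exists_ne_map_eq_of_card_lt_of_maps_to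
      (s := (Finset.univ : Finset (Fin (S.card + 1)))) (t := S)
      (by simp) (fun a _ => hiter a)
  wlog hlt : (i : ℕ) < (j : ℕ) generalizing i j
  · have hne := Fin.val_ne_of_ne hij
    exact this j i hij.symm hfij.symm (by omega)
  · have hy : f^[(j : ℕ) - i] (f^[(i : ℕ)] x) = f^[(i : ℕ)] x := by
      rw [← Function.iterate_add_apply]
      rw [Nat.sub_add_cancel hlt.le]
      exact hfij.symm ▸ hfij.symm
    have hyne : f^[(i : ℕ)] x ≠ r := fun he => hr (he ▸ hiter i)
    exact hnc _ hyne _ (by omega) hy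

/-- Every value recorded in the code is the parent of some vertex of `S`. -/
lemma mem_of_mem_encode (f : Fin m → Fin m) :
    ∀ S : Finset (Fin m), ∀ a ∈ encode f S, ∃ y ∈ S, f y = a := by
  intro S
  induction S using Finset.strongInduction with
  | _ S ih =>
    intro a ha
    by_cases h : 2 ≤ S.card ∧ (leaves f S).Nonempty
    · rw [encode_of_cond h] at ha
      set ℓ := (leaves f S).max' h.2 with hℓ
      have hmem : ℓ ∈ S := Finset.filter_subset _ _ ((leaves f S).max'_mem h.2)
      rcases List.mem_cons.mp ha with h1 | h1
      · exact ⟨ℓ, hmem, h1.symm⟩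
      · obtain ⟨y, hy, hfy⟩ := ih _ (Finset.erase_ssubset hmem) a h1
        exact ⟨y, Finset.mem_of_mem_erase hy, hfy⟩
    · rw [encode_of_not h] at ha
      simp at ha

/-- The parent being removed stays inside `S ∪ {r}`; this invariant is preserved. -/
lemma hC_erase {f : Fin m → Fin m} {r : Fin m} {S : Finset (Fin m)}
    (hC : ∀ x ∈ S, f x ∈ S ∨ f x = r) {ℓ : Fin m} (hℓ : ℓ ∈ leaves f S) :
    ∀ x ∈ S.erase ℓ, f x ∈ S.erase ℓ ∨ f x = r := by
  intro x hx
  have hxS : x ∈ S := Finset.mem_of_mem_erase hx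
  rcases hC x hxS with h | h
  · left
    refine Finset.mem_erase.mpr ⟨?_, h⟩
    exact (Finset.mem_filter.mp hℓ).2 x hxS
  · right; exact h

lemma encode_length {f : Fin m → Fin m} {r : Fin m}
    (hnc : ∀ x, x ≠ r → ∀ k, 1 ≤ k → f^[k] x ≠ x) :
    ∀ S : Finset (Fin m), r ∉ S → S.Nonempty → (encode f S).length = S.card - 1 := by
  intro S
  induction S using Finset.strongInduction with
  | _ S ih =>
    intro hr hS
    by_cases h2 : 2 ≤ S.card
    · have hlf : (leaves f S).Nonempty := exists_leaf hnc hr hS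
      have h : 2 ≤ S.card ∧ (leaves f S).Nonempty := ⟨h2, hlf⟩
      rw [encode_of_cond h]
      set ℓ := (leaves f S).max' h.2 with hℓdef
      have hmem : ℓ ∈ S := Finset.filter_subset _ _ ((leaves f S).max'_mem h.2)
      have hcard : (S.erase ℓ).card = S.card - 1 := Finset.card_erase_of_mem hmem
      have hne : (S.erase ℓ).Nonempty := Finset.card_pos.mp (by omega)
      have := ih _ (Finset.erase_ssubset hmem)
        (fun hc => hr (Finset.mem_of_mem_erase hc)) hne
      simp only [List.length_cons, this, hcard]
      omega
    · rw [encode_of_not (fun hc => h2 hc.1)]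
      have := Finset.card_pos.mpr hS
      simp; omega

/-- Every in-`S` parent value occurs in the code. -/
lemma mem_encode {f : Fin m → Fin m} {r : Fin m}
    (hnc : ∀ x, x ≠ r → ∀ k, 1 ≤ k → f^[k] x ≠ x) :
    ∀ S : Finset (Fin m), r ∉ S → ∀ y ∈ S, f y ∈ S → f y ∈ encode f S := by
  intro S
  induction S using Finset.strongInduction with
  | _ S ih =>
    intro hr y hy hfy
    by_cases h2 : 2 ≤ S.card
    · have hlf : (leaves f S).Nonempty := exists_leaf hnc hr ⟨y, hy⟩
      have h : 2 ≤ S.card ∧ (leaves f S).Nonempty := ⟨h2, hlf⟩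
      rw [encode_of_cond h]
      set ℓ := (leaves f S).max' h.2 with hℓdef
      have hℓmem : ℓ ∈ leaves f S := (leaves f S).max'_mem h.2
      have hmem : ℓ ∈ S := Finset.filter_subset _ _ hℓmem
      by_cases hyl : y = ℓ
      · subst hyl; exact List.mem_cons_self
      · have hyerase : y ∈ S.erase ℓ := Finset.mem_erase.mpr ⟨hyl, hy⟩
        have hfyne : f y ≠ ℓ := (Finset.mem_filter.mp hℓmem).2 y hy
        have hfyerase : f y ∈ S.erase ℓ := Finset.mem_erase.mpr ⟨hfyne, hfy⟩
        exact List.mem_cons_of_mem _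
          (ih _ (Finset.erase_ssubset hmem)
            (fun hc => hr (Finset.mem_of_mem_erase hc)) y hyerase hfyerase)
    · have hpos := Finset.card_pos.mpr ⟨y, hy⟩
      have hcard : S.card = 1 := by omega
      obtain ⟨a, ha⟩ := Finset.card_eq_one.mp hcard
      subst ha
      simp only [Finset.mem_singleton] at hy hfy
      have : f y = y := by rw [hy] at hfy ⊢; exact hfy
      exact absurd this (by
        have hyr : y ≠ r := fun he => hr (he ▸ hy ▸ Finset.mem_singleton_self a)
        have := hnc y hyr 1 le_rfl
        simpa using this)

/-- Main injectivity: the code, together with `S`, determines `f` on `S`. -/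
lemma encode_inj {f g : Fin m → Fin m} {r : Fin m}
    (hncf : ∀ x, x ≠ r → ∀ k, 1 ≤ k → f^[k] x ≠ x)
    (hncg : ∀ x, x ≠ r → ∀ k, 1 ≤ k → g^[k] x ≠ x) :
    ∀ S : Finset (Fin m), r ∉ S →
      (∀ x ∈ S, f x ∈ S ∨ f x = r) → (∀ x ∈ S, g x ∈ S ∨ g x = r) →
      encode f S = encode g S → ∀ x ∈ S, f x = g x := by
  intro S
  induction S using Finset.strongInduction with
  | _ S ih =>
    intro hr hCf hCg hcode x hx
    by_cases h2 : 2 ≤ S.card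
    · have hlf : (leaves f S).Nonempty := exists_leaf hncf hr ⟨x, hx⟩
      have hlg : (leaves g S).Nonempty := exists_leaf hncg hr ⟨x, hx⟩
      have hset : leaves f S = leaves g S := by
        ext z
        simp only [leaves, Finset.mem_filter]
        constructor
        · rintro ⟨hzS, hzf⟩
          refine ⟨hzS, fun y hy hgy => ?_⟩
          have hzenc : z ∈ encode g S := hgy ▸ mem_encode hncg S hr y hy (hgy ▸ hzS)
          rw [← hcode] at hzenc
          obtain ⟨u, hu, hfu⟩ := mem_of_mem_encode f S z hzenc
          exact hzf u hu hfu
        · rintro ⟨hzS, hzg⟩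
          refine ⟨hzS, fun y hy hfy => ?_⟩
          have hzenc : z ∈ encode f S := hfy ▸ mem_encode hncf S hr y hy (hfy ▸ hzS)
          rw [hcode] at hzenc
          obtain ⟨u, hu, hgu⟩ := mem_of_mem_encode g S z hzenc
          exact hzg u hu hgu
      have hf : 2 ≤ S.card ∧ (leaves f S).Nonempty := ⟨h2, hlf⟩
      have hg : 2 ≤ S.card ∧ (leaves g S).Nonempty := ⟨h2, hlg⟩
      have hℓeq : (leaves f S).max' hf.2 = (leaves g S).max' hg.2 := by
        have h1 : (leaves f S).max' hf.2 ∈ leaves g S := hset ▸ (leaves f S).max'_mem hf.2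
        have h2' : (leaves g S).max' hg.2 ∈ leaves f S := hset.symm ▸ (leaves g S).max'_mem hg.2
        exact le_antisymm (Finset.le_max' _ _ h1) (Finset.le_max' _ _ h2')
      rw [encode_of_cond hf, encode_of_cond hg] at hcode
      set ℓ := (leaves f S).max' hf.2 with hℓdef
      rw [← hℓeq] at hcode
      have hheads : f ℓ = g ℓ := (List.cons.injEq _ _ _ _ ▸ hcode).1
      have htails : encode f (S.erase ℓ) = encode g (S.erase ℓ) :=
        (List.cons.injEq _ _ _ _ ▸ hcode).2
      have hℓf : ℓ ∈ leaves f S := (leaves f S).max'_mem hf.2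
      have hℓg : ℓ ∈ leaves g S := hset ▸ hℓf
      have hmem : ℓ ∈ S := Finset.filter_subset _ _ hℓf
      by_cases hxl : x = ℓ
      · subst hxl; exact hheads
      · exact ih _ (Finset.erase_ssubset hmem)
          (fun hc => hr (Finset.mem_of_mem_erase hc))
          (hC_erase hCf hℓf) (hC_erase hCg hℓg) htails x (Finset.mem_erase.mpr ⟨hxl, hx⟩)
    · have hpos := Finset.card_pos.mpr ⟨x, hx⟩
      have hcard : S.card = 1 := by omega
      obtain ⟨a, ha⟩ := Finset.card_eq_one.mp hcard
      subst ha
      simp only [Finset.mem_singleton] at hx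
      subst hx
      have hxr : x ≠ r := fun he => hr (he ▸ Finset.mem_singleton_self x)
      have hfx : f x = r := by
        rcases hCf x (Finset.mem_singleton_self x) with h | h
        · exfalso
          simp only [Finset.mem_singleton] at h
          exact hncf x hxr 1 le_rfl (by simpa using h)
        · exact h
      have hgx : g x = r := by
        rcases hCg x (Finset.mem_singleton_self x) with h | h
        · exfalso
          simp only [Finset.mem_singleton] at h
          exact hncg x hxr 1 le_rfl (by simpa using h)
        · exact h
      rw [hfx, hgx]

variable {n : ℕ}

/-- Extend an aperiodic transformation of `Fin n` to a parent function on
`Fin (n+1)` by sending fixed points (and the root `last n`) to the root. -/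
def extt (t : Fin n → Fin n) : Fin (n + 1) → Fin (n + 1) := fun x =>
  if hx : x = Fin.last n then Fin.last n
  else if t (x.castPred hx) = x.castPred hx then Fin.last n
    else Fin.castSucc (t (x.castPred hx))

lemma extt_last (t : Fin n → Fin n) : extt t (Fin.last n) = Fin.last n := by simp [extt]

lemma extt_castSucc (t : Fin n → Fin n) (y : Fin n) :
    extt t y.castSucc = if t y = y then Fin.last n else Fin.castSucc (t y) := by
  have h : y.castSucc ≠ Fin.last n := (Fin.castSucc_lt_last y).ne
  simp [extt, h]
  congr

lemma extt_iter_last (t : Fin n → Fin n) (k : ℕ) :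
    (extt t)^[k] (Fin.last n) = Fin.last n :=
  Function.iterate_fixed (extt_last t) k

lemma extt_iter (t : Fin n → Fin n) (k : ℕ) (y : Fin n) :
    (extt t)^[k] y.castSucc = (t^[k] y).castSucc ∨
      (extt t)^[k] y.castSucc = Fin.last n := by
  induction k with
  | zero => left; rfl
  | succ k ih =>
    rw [Function.iterate_succ_apply']
    rcases ih with h | h
    · rw [h, extt_castSucc]
      by_cases hc : t (t^[k] y) = t^[k] y
      · right; simp [hc]
      · left; rw [if_neg hc, Function.iterate_succ_apply']
    · rw [h, extt_last]; right; rfl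

lemma extt_hnc {t : Fin n → Fin n} (ht : Aperiodic' t) :
    ∀ x, x ≠ Fin.last n → ∀ k, 1 ≤ k → (extt t)^[k] x ≠ x := by
  intro x hx k hk hiter
  obtain ⟨y, rfl⟩ := Fin.exists_castSucc_eq.mpr hx
  rcases extt_iter t k y with h | h
  · rw [hiter] at h
    have hty : t^[k] y = y := Fin.castSucc_injective n h.symm
    have h1 : t y = y := ht y k hk hty
    have h2 : extt t y.castSucc = Fin.last n := by rw [extt_castSucc, if_pos h1]
    obtain ⟨k', rfl⟩ := Nat.exists_eq_succ_of_ne_zero (by omega : k ≠ 0)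
    rw [Function.iterate_succ_apply, h2, extt_iter_last] at hiter
    exact (Fin.castSucc_lt_last y).ne hiter.symm
  · rw [hiter] at h
    exact (Fin.castSucc_lt_last y).ne h

/-- The non-root vertices. -/
def S0 (n : ℕ) : Finset (Fin (n + 1)) := Finset.univ.erase (Fin.last n)

lemma S0_card : (S0 n).card = n := by
  simp [S0, Finset.card_erase_of_mem]

lemma last_not_mem_S0 : Fin.last n ∉ S0 n := Finset.notMem_erase _ _

lemma hC_S0 (f : Fin (n + 1) → Fin (n + 1)) :
    ∀ x ∈ S0 n, f x ∈ S0 n ∨ f x = Fin.last n := by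
  intro x _
  by_cases h : f x = Fin.last n
  · right; exact h
  · left; exact Finset.mem_erase.mpr ⟨h, Finset.mem_univ _⟩

lemma castSucc_mem_S0 (y : Fin n) : y.castSucc ∈ S0 n :=
  Finset.mem_erase.mpr ⟨(Fin.castSucc_lt_last y).ne, Finset.mem_univ _⟩

lemma extt_inj {t₁ t₂ : Fin n → Fin n}
    (h : ∀ x ∈ S0 n, extt t₁ x = extt t₂ x) : t₁ = t₂ := by
  funext y
  have hy := h y.castSucc (castSucc_mem_S0 y)
  rw [extt_castSucc, extt_castSucc] at hy
  by_cases h1 : t₁ y = y <;> by_cases h2 : t₂ y = y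
  · rw [h1, h2]
  · rw [if_pos h1, if_neg h2] at hy
    exact absurd hy.symm (Fin.castSucc_lt_last _).ne
  · rw [if_neg h1, if_pos h2] at hy
    exact absurd hy (Fin.castSucc_lt_last _).ne
  · rw [if_neg h1, if_neg h2] at hy
    exact Fin.castSucc_injective n hy

end APC

/-- If every word of a DFA with `n` states performs an aperiodic transformation,
then the transition semigroup has at most `(n+1)^(n-1)` elements. -/
theorem card_transition_semigroup_le_of_aperiodic (n : ℕ) (hn : 1 ≤ n)
    {α : Type*} [Fintype α] (M : DFA α (Fin n))
    (hap : ∀ w : List α, Aperiodic' (fun q => M.evalFrom q w)) :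
    Nat.card {f : Fin n → Fin n | ∃ w : List α, w ≠ [] ∧ f = fun q => M.evalFrom q w}
      ≤ (n + 1) ^ (n - 1) := by
  classical
  have hsub : {f : Fin n → Fin n | ∃ w : List α, w ≠ [] ∧ f = fun q => M.evalFrom q w}
      ⊆ {t : Fin n → Fin n | Aperiodic' t} := by
    rintro f ⟨w, -, rfl⟩
    exact hap w
  have hS0ne : (APC.S0 n).Nonempty := Finset.card_pos.mp (by rw [APC.S0_card]; omega)
  set φ : {t : Fin n → Fin n | Aperiodic' t} → (Fin (n - 1) → Fin (n + 1)) :=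
    fun t i => (APC.encode (APC.extt t.1) (APC.S0 n)).getD i (Fin.last n) with hφ
  have hφinj : Function.Injective φ := by
    rintro ⟨t₁, h₁⟩ ⟨t₂, h₂⟩ heq
    have hnc₁ := APC.extt_hnc h₁
    have hnc₂ := APC.extt_hnc h₂
    have hlen₁ : (APC.encode (APC.extt t₁) (APC.S0 n)).length = n - 1 := by
      rw [APC.encode_length hnc₁ (APC.S0 n) APC.last_not_mem_S0 hS0ne, APC.S0_card]
    have hlen₂ : (APC.encode (APC.extt t₂) (APC.S0 n)).length = n - 1 := by
      rw [APC.encode_length hnc₂ (APC.S0 n) APC.last_not_mem_S0 hS0ne, APC.S0_card]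
    have hlists : APC.encode (APC.extt t₁) (APC.S0 n) = APC.encode (APC.extt t₂) (APC.S0 n) := by
      apply List.ext_getElem (hlen₁.trans hlen₂.symm)
      intro i hi1 hi2
      have hi : i < n - 1 := hlen₁ ▸ hi1
      have := congrFun heq ⟨i, hi⟩
      simp only [hφ] at this
      rwa [List.getD_eq_getElem _ _ hi1, List.getD_eq_getElem _ _ hi2] at this
    have := APC.encode_inj hnc₁ hnc₂ (APC.S0 n) APC.last_not_mem_S0
      (APC.hC_S0 (APC.extt t₁)) (APC.hC_S0 (APC.extt t₂)) hlists
    exact Subtype.ext (APC.extt_inj this)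
  calc Nat.card {f : Fin n → Fin n | ∃ w : List α, w ≠ [] ∧ f = fun q => M.evalFrom q w}
      ≤ Nat.card {t : Fin n → Fin n | Aperiodic' t} :=
        Nat.card_mono (Set.toFinite _) hsub
    _ ≤ Nat.card (Fin (n - 1) → Fin (n + 1)) := Nat.card_le_card_of_injective φ hφinj
    _ = (n + 1) ^ (n - 1) := by
        rw [Nat.card_eq_fintype_card, Fintype.card_fun]
        simp
end

section
/- For every n ≥ 1, the set of all monotonic transformations of the set {1,…,n} is generated, as a semigroup under composition, by the following n+1 transformations: a with 1a = 1 and ia = i−1 for 2 ≤ i ≤ n; for each 1 ≤ i ≤ n−1, b_i with i b_i = i+1 and j b_i = j for all j ≠ i; and c, the identity transformation. That is, the subsemigroup generated by {a, b_1, …, b_{n−1}, c} equals the set of all monotone maps of {1,…,n} into itself. -/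
inductive GenBy {n : ℕ} (S : Set (Fin n → Fin n)) : (Fin n → Fin n) → Prop
  | base {t : Fin n → Fin n} : t ∈ S → GenBy S t
  | comp {a b : Fin n → Fin n} : GenBy S a → GenBy S b → GenBy S (b ∘ a)

section Aux

variable {n : ℕ}

def amap (n : ℕ) : Fin n → Fin n := fun j => ⟨j.val - 1, (Nat.sub_le _ _).trans_lt j.isLt⟩

def bmap (i : Fin n) (h : i.val + 1 < n) : Fin n → Fin n :=
  fun j => if j = i then ⟨i.val + 1, h⟩ else j

def Sgen (n : ℕ) : Set (Fin n → Fin n) :=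
  {amap n} ∪ {t : Fin n → Fin n | ∃ (i : Fin n) (h : i.val + 1 < n), t = bmap i h} ∪ {id}

lemma mem_a : amap n ∈ Sgen n := Or.inl (Or.inl rfl)

lemma mem_b (i : Fin n) (h : i.val + 1 < n) : bmap i h ∈ Sgen n :=
  Or.inl (Or.inr ⟨i, h, rfl⟩)

lemma mem_id : (id : Fin n → Fin n) ∈ Sgen n := Or.inr rfl

lemma amap_val (j : Fin n) : (amap n j).val = j.val - 1 := rfl

lemma bmap_val (i : Fin n) (h : i.val + 1 < n) (j : Fin n) :
    (bmap i h j).val = if j.val = i.val then i.val + 1 else j.val := by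
  by_cases hj : j = i <;> simp [bmap, hj, Fin.val_eq_val]

def Gmap (m : ℕ) : Fin n → Fin n :=
  fun j => if m + 1 ≤ j.val then j else ⟨j.val - 1, (Nat.sub_le _ _).trans_lt j.isLt⟩

lemma Gmap_val (m : ℕ) (j : Fin n) :
    (Gmap m j).val = if m + 1 ≤ j.val then j.val else j.val - 1 := by
  unfold Gmap; split_ifs <;> rfl

lemma gen_G : ∀ d m, 1 ≤ m → m + d + 1 = n → GenBy (Sgen n) (Gmap (n := n) m) := by
  intro d
  induction d with
  | zero =>
    intro m hm1 hm
    have he : Gmap (n := n) m = amap n := by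
      funext j; apply Fin.ext; rw [Gmap_val, amap_val]
      have := j.isLt; split_ifs <;> omega
    rw [he]; exact .base mem_a
  | succ d ih =>
    intro m hm1 hm
    have hb : m + 1 < n := by omega
    have he : Gmap (n := n) m = bmap ⟨m, by omega⟩ hb ∘ Gmap (m + 1) := by
      funext j; apply Fin.ext
      simp only [Function.comp_apply, bmap_val, Gmap_val, Fin.val_mk]
      have := j.isLt
      split_ifs <;> omega
    rw [he]
    exact .comp (ih (m + 1) (by omega) (by omega)) (.base (mem_b _ _))

def Hmap (i : ℕ) (h : i + 1 < n) : Fin n → Fin n :=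
  fun j => if h' : j.val ≤ i then ⟨j.val + 1, by omega⟩ else j

lemma Hmap_val (i : ℕ) (h : i + 1 < n) (j : Fin n) :
    (Hmap i h j).val = if j.val ≤ i then j.val + 1 else j.val := by
  unfold Hmap; split_ifs <;> rfl

lemma gen_H : ∀ (i : ℕ) (h : i + 1 < n), GenBy (Sgen n) (Hmap i h) := by
  intro i
  induction i with
  | zero =>
    intro h
    have he : Hmap 0 h = bmap ⟨0, by omega⟩ (show (0:ℕ) + 1 < n from h) := by
      funext j; apply Fin.ext
      rw [Hmap_val, bmap_val]; simp only [Fin.val_mk]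
      split_ifs <;> omega
    rw [he]; exact .base (mem_b _ _)
  | succ i ih =>
    intro h
    have h' : i + 1 < n := by omega
    have he : Hmap (i + 1) h
        = Hmap i h' ∘ bmap ⟨i + 1, by omega⟩ (show (i:ℕ) + 1 + 1 < n from h) := by
      funext j; apply Fin.ext
      simp only [Function.comp_apply, Hmap_val, bmap_val, Fin.val_mk]
      split_ifs <;> omega
    rw [he]
    exact .comp (.base (mem_b _ _)) (ih h')

def Vmap (v : ℕ) (h : v + 1 < n) : Fin n → Fin n :=
  fun j => if j.val = v + 1 then ⟨v, by omega⟩ else j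

lemma Vmap_val (v : ℕ) (h : v + 1 < n) (j : Fin n) :
    (Vmap v h j).val = if j.val = v + 1 then v else j.val := by
  unfold Vmap; split_ifs <;> rfl

lemma gen_V (v : ℕ) (h : v + 1 < n) : GenBy (Sgen n) (Vmap v h) := by
  have he : Vmap v h = Gmap (v + 1) ∘ Hmap v h := by
    funext j; apply Fin.ext
    simp only [Function.comp_apply, Vmap_val, Gmap_val, Hmap_val]
    have := j.isLt
    split_ifs <;> omega
  rw [he]
  exact .comp (gen_H v h) (gen_G (n - v - 2) (v + 1) (by omega) (by omega))

lemma lemB (t : Fin n → Fin n) (ht : Monotone t) (hge : ∀ j : Fin n, j.val ≤ (t j).val) :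
    GenBy (Sgen n) t := by
  classical
  suffices key : ∀ W (t : Fin n → Fin n), Monotone t → (∀ j, j.val ≤ (t j).val) →
      (∑ j, ((t j).val - j.val)) = W → GenBy (Sgen n) t from key _ t ht hge rfl
  intro W
  induction W using Nat.strong_induction_on with
  | _ W ih =>
  intro t ht hge hW
  by_cases hex : ∃ j : Fin n, j.val < (t j).val
  · obtain ⟨j0, hj0⟩ := hex
    set F : Finset (Fin n) := Finset.univ.filter (fun j => j.val < (t j).val) with hF
    have hFne : F.Nonempty := ⟨j0, by
      simp only [hF, Finset.mem_filter, Finset.mem_univ, true_and]; exact hj0⟩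
    set j := F.min' hFne with hjdef
    have hjF : j ∈ F := F.min'_mem hFne
    have hjlt : j.val < (t j).val := by simpa [hF] using hjF
    set v := (t j).val with hv
    have hvn : v < n := (t j).isLt
    have hfix : ∀ k : Fin n, k.val < j.val → (t k).val = k.val := by
      intro k hk
      by_contra hne
      have hkF : k ∈ F := by simp only [hF, Finset.mem_filter, Finset.mem_univ, true_and]
                             have := hge k; omega
      have hle := F.min'_le k hkF
      rw [← hjdef, Fin.le_def] at hle
      omega
    have hne : ∀ k : Fin n, (t k).val ≠ v - 1 := by
      intro k hk
      rcases lt_or_ge k.val j.val with h | h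
      · have := hfix k h; omega
      · have hmm := ht (show j ≤ k from Fin.le_def.mpr h)
        rw [Fin.le_def, ← hv] at hmm
        omega
    set t' : Fin n → Fin n :=
      fun k => if (t k).val = v ∧ k.val < v then ⟨v - 1, by omega⟩ else t k with ht'def
    have ht'val : ∀ k, (t' k).val = if (t k).val = v ∧ k.val < v then v - 1 else (t k).val := by
      intro k; simp only [ht'def]; split_ifs <;> rfl
    have hmono' : Monotone t' := by
      intro k l hkl
      have hm := ht hkl
      rw [Fin.le_def] at hm hkl ⊢
      rw [ht'val, ht'val]
      split_ifs <;> omega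
    have hge' : ∀ k : Fin n, k.val ≤ (t' k).val := by
      intro k; rw [ht'val]; have := hge k; split_ifs <;> omega
    have hsum : (∑ k, ((t' k).val - k.val)) < W := by
      rw [← hW]
      apply Finset.sum_lt_sum
      · intro k _; rw [ht'val]; split_ifs <;> omega
      · exact ⟨j, Finset.mem_univ j, by rw [ht'val, if_pos ⟨hv.symm, hjlt⟩]; omega⟩
    have hb1 : v - 1 + 1 < n := by omega
    have hfact : t = bmap ⟨v - 1, by omega⟩ hb1 ∘ t' := by
      funext k; apply Fin.ext
      simp only [Function.comp_apply, bmap_val, ht'val, Fin.val_mk]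
      have := hne k
      split_ifs <;> omega
    rw [hfact]
    exact .comp (ih _ hsum t' hmono' hge' rfl) (.base (mem_b _ _))
  · have : t = id := by
      funext k; apply Fin.ext
      show (t k).val = k.val
      push_neg at hex
      have := hex k; have := hge k; omega
    rw [this]; exact .base mem_id

lemma lemA (t : Fin n → Fin n) (ht : Monotone t) (hle : ∀ j : Fin n, (t j).val ≤ j.val) :
    GenBy (Sgen n) t := by
  classical
  suffices key : ∀ W (t : Fin n → Fin n), Monotone t → (∀ j, (t j).val ≤ j.val) →
      (∑ j, (j.val - (t j).val)) = W → GenBy (Sgen n) t from key _ t ht hle rfl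
  intro W
  induction W using Nat.strong_induction_on with
  | _ W ih =>
  intro t ht hle hW
  by_cases hex : ∃ j : Fin n, (t j).val < j.val
  · obtain ⟨j0, hj0⟩ := hex
    set F : Finset (Fin n) := Finset.univ.filter (fun j => (t j).val < j.val) with hF
    have hFne : F.Nonempty := ⟨j0, by
      simp only [hF, Finset.mem_filter, Finset.mem_univ, true_and]; exact hj0⟩
    set j := F.max' hFne with hjdef
    have hjF : j ∈ F := F.max'_mem hFne
    have hjlt : (t j).val < j.val := by simpa [hF] using hjF
    set v := (t j).val with hv
    have hjn : j.val < n := j.isLt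
    have hv1 : v + 1 < n := by omega
    have hfix : ∀ k : Fin n, j.val < k.val → (t k).val = k.val := by
      intro k hk
      by_contra hne
      have hkF : k ∈ F := by simp only [hF, Finset.mem_filter, Finset.mem_univ, true_and]
                             have := hle k; omega
      have hge2 := F.le_max' k hkF
      rw [← hjdef, Fin.le_def] at hge2
      omega
    have hne : ∀ k : Fin n, (t k).val ≠ v + 1 := by
      intro k hk
      rcases le_or_gt k.val j.val with h | h
      · have hmm := ht (show k ≤ j from Fin.le_def.mpr h)
        rw [Fin.le_def, ← hv] at hmm
        omega
      · have := hfix k h; omega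
    set t' : Fin n → Fin n :=
      fun k => if (t k).val = v ∧ v < k.val then ⟨v + 1, by omega⟩ else t k with ht'def
    have ht'val : ∀ k, (t' k).val = if (t k).val = v ∧ v < k.val then v + 1 else (t k).val := by
      intro k; simp only [ht'def]; split_ifs <;> rfl
    have hmono' : Monotone t' := by
      intro k l hkl
      have hm := ht hkl
      rw [Fin.le_def] at hm hkl ⊢
      rw [ht'val, ht'val]
      split_ifs <;> omega
    have hle' : ∀ k : Fin n, (t' k).val ≤ k.val := by
      intro k; rw [ht'val]; have := hle k; split_ifs <;> omega
    have hsum : (∑ k, (k.val - (t' k).val)) < W := by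
      rw [← hW]
      apply Finset.sum_lt_sum
      · intro k _; rw [ht'val]; split_ifs <;> omega
      · exact ⟨j, Finset.mem_univ j, by rw [ht'val, if_pos ⟨hv.symm, hjlt⟩]; omega⟩
    have hfact : t = Vmap v hv1 ∘ t' := by
      funext k; apply Fin.ext
      simp only [Function.comp_apply, Vmap_val, ht'val]
      have := hne k
      split_ifs <;> omega
    rw [hfact]
    exact .comp (ih _ hsum t' hmono' hle' rfl) (gen_V v hv1)
  · have : t = id := by
      funext k; apply Fin.ext
      show (t k).val = k.val
      push_neg at hex
      have := hex k; have := hle k; omega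
    rw [this]; exact .base mem_id

lemma gen_monotone {t : Fin n → Fin n} (h : GenBy (Sgen n) t) : Monotone t := by
  induction h with
  | base hs =>
    rcases hs with (hs | hs) | hs
    · rw [Set.mem_singleton_iff] at hs
      subst hs
      intro k l hkl
      rw [Fin.le_def] at hkl ⊢
      rw [amap_val, amap_val]; omega
    · obtain ⟨i, hi, rfl⟩ := hs
      intro k l hkl
      rw [Fin.le_def] at hkl ⊢
      rw [bmap_val, bmap_val]
      split_ifs <;> omega
    · rw [Set.mem_singleton_iff] at hs
      subst hs
      exact monotone_id
  | comp ha hb iha ihb => exact ihb.comp iha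

lemma gen_of_monotone {t : Fin n → Fin n} (ht : Monotone t) : GenBy (Sgen n) t := by
  classical
  set tlo : Fin n → Fin n := fun j => if (t j).val ≤ j.val then t j else j with hlo
  set thi : Fin n → Fin n := fun j => if j.val ≤ (t j).val then t j else j with hhi
  have vlo : ∀ j, (tlo j).val = if (t j).val ≤ j.val then (t j).val else j.val := by
    intro j; simp only [hlo]; split_ifs <;> rfl
  have vhi : ∀ j, (thi j).val = if j.val ≤ (t j).val then (t j).val else j.val := by
    intro j; simp only [hhi]; split_ifs <;> rfl
  have hmlo : Monotone tlo := by
    intro k l hkl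
    have hm := ht hkl
    rw [Fin.le_def] at hm hkl ⊢
    rw [vlo, vlo]; split_ifs <;> omega
  have hmhi : Monotone thi := by
    intro k l hkl
    have hm := ht hkl
    rw [Fin.le_def] at hm hkl ⊢
    rw [vhi, vhi]; split_ifs <;> omega
  have h1 : GenBy (Sgen n) tlo := lemA tlo hmlo (by intro j; rw [vlo]; split_ifs <;> omega)
  have h2 : GenBy (Sgen n) thi := lemB thi hmhi (by intro j; rw [vhi]; split_ifs <;> omega)
  have hfact : t = thi ∘ tlo := by
    funext j; apply Fin.ext
    rcases le_or_gt (t j).val j.val with h | h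
    · have e : tlo j = t j := by simp only [hlo]; rw [if_pos h]
      rw [Function.comp_apply, e, vhi]
      have hmm := ht (show t j ≤ j from Fin.le_def.mpr h)
      rw [Fin.le_def] at hmm
      split_ifs <;> omega
    · have e : tlo j = j := by simp only [hlo]; rw [if_neg (by omega)]
      rw [Function.comp_apply, e, vhi]
      split_ifs <;> omega
  rw [hfact]
  exact .comp h1 h2

end Aux

/-- For every `n ≥ 1`, the semigroup of all monotonic transformations of
`{1,…,n}` (written 0-indexed on `Fin n`) is generated by the `n+1`
transformations: `a` (with `1a = 1` and `ia = i-1` for `i ≥ 2`), the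
transformations `b_i` (with `i b_i = i+1` and `j b_i = j` for `j ≠ i`),
and the identity `c`. -/
theorem monotone_semigroup_generators (n : ℕ) (hn : 1 ≤ n) :
    {t : Fin n → Fin n | GenBy
      (({fun j : Fin n => (⟨j.val - 1, by have := j.isLt; omega⟩ : Fin n)} ∪
        {t : Fin n → Fin n | ∃ (i : Fin n) (h : i.val + 1 < n),
          t = fun j : Fin n => if j = i then (⟨i.val + 1, h⟩ : Fin n) else j} ∪
        {id}) : Set (Fin n → Fin n)) t}
    = {t : Fin n → Fin n | Monotone t} := by
  have hS : (({fun j : Fin n => (⟨j.val - 1, by have := j.isLt; omega⟩ : Fin n)} ∪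
        {t : Fin n → Fin n | ∃ (i : Fin n) (h : i.val + 1 < n),
          t = fun j : Fin n => if j = i then (⟨i.val + 1, h⟩ : Fin n) else j} ∪
        {id}) : Set (Fin n → Fin n)) = Sgen n := rfl
  rw [hS]
  ext t
  simp only [Set.mem_setOf_eq]
  exact ⟨gen_monotone, gen_of_monotone⟩
end

section
/- For every n ≥ 2, the semigroup of all monotonic transformations of {1,…,n} cannot be generated by fewer than n+1 elements: every subset S of monotonic transformations of Fin n whose closure under composition equals the set of all monotonic transformations of Fin n has cardinality at least n+1. -/
/-- A monotone injective self-map of `Fin n` is the identity. -/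
lemma mono_inj_eq_id {n : ℕ} {f : Fin n → Fin n} (hm : Monotone f)
    (hi : Function.Injective f) : f = id := by
  have hsm : StrictMono f := hm.strictMono_of_injective hi
  have hb : Function.Bijective f := Finite.injective_iff_bijective.mp hi
  let e : Fin n ≃o Fin n :=
    { toEquiv := Equiv.ofBijective f hb
      map_rel_iff' := fun {a b} => hsm.le_iff_le }
  have he : e = OrderIso.refl (Fin n) := Subsingleton.elim _ _
  funext i
  have : e i = i := by rw [he]; rfl
  exact this

lemma id_mem {n : ℕ} {S : Set (Fin n → Fin n)} (hS : ∀ t ∈ S, Monotone t)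
    {t : Fin n → Fin n} (ht : GenBy S t) (hi : Function.Injective t) : id ∈ S := by
  induction ht with
  | base h => have := mono_inj_eq_id (hS _ h) hi; rwa [← this]
  | comp ha hb iha ihb =>
      exact iha (Function.Injective.of_comp hi)

lemma key_lemma {n : ℕ} {S : Set (Fin n → Fin n)}
    (hmono : ∀ t, GenBy S t → Monotone t)
    {t : Fin n → Fin n} (ht : GenBy S t)
    (hcard : (Finset.univ.image t).card = n - 1) (hn : 2 ≤ n) :
    ∃ s ∈ S, Finset.univ.image s = Finset.univ.image t := by
  induction ht with
  | base h => exact ⟨_, h, rfl⟩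
  | @comp a b ha hb iha ihb =>
      have hsub : Finset.univ.image (b ∘ a) ⊆ Finset.univ.image b := by
        intro x hx
        simp only [Finset.mem_image, Function.comp_apply] at hx ⊢
        obtain ⟨i, _, hi⟩ := hx
        exact ⟨a i, Finset.mem_univ _, hi⟩
      have hle : n - 1 ≤ (Finset.univ.image b).card := by
        rw [← hcard]; exact Finset.card_le_card hsub
      have hub : (Finset.univ.image b).card ≤ n := by
        have := Finset.card_image_le (s := (Finset.univ : Finset (Fin n))) (f := b)
        simpa using this
      rcases eq_or_lt_of_le hub with hbn | hblt
      · -- b has full image, hence b = id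
        have hbu : Finset.univ.image b = Finset.univ :=
          Finset.eq_univ_of_card _ (by simpa using hbn)
        have hsurj : Function.Surjective b := by
          intro y
          have hy : y ∈ Finset.univ.image b := by rw [hbu]; exact Finset.mem_univ y
          obtain ⟨x, _, hx⟩ := Finset.mem_image.mp hy
          exact ⟨x, hx⟩
        have hinj : Function.Injective b := Finite.injective_iff_surjective.mpr hsurj
        have hbid : b = id := mono_inj_eq_id (hmono b hb) hinj
        have hba : b ∘ a = a := by rw [hbid]; rfl
        obtain ⟨s, hsS, hs⟩ := iha (by rwa [← hba])
        exact ⟨s, hsS, by rw [hs, hba]⟩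
      · have hbcard : (Finset.univ.image b).card = n - 1 := by omega
        have heq : Finset.univ.image (b ∘ a) = Finset.univ.image b :=
          Finset.eq_of_subset_of_card_le hsub (by omega)
        obtain ⟨s, hsS, hs⟩ := ihb hbcard
        exact ⟨s, hsS, by rw [hs, heq]⟩

lemma exists_mono_erase {n : ℕ} (hn : 2 ≤ n) (k : Fin n) :
    ∃ f : Fin n → Fin n, Monotone f ∧ Finset.univ.image f = Finset.univ.erase k := by
  have hne : ∀ a b : Fin n, a ≠ b → (a : ℕ) ≠ (b : ℕ) := fun a b h hc => h (Fin.ext hc)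
  have himage : ∀ f : Fin n → Fin n, (∀ i, i ≠ k → f i = i) → f k ≠ k →
      Finset.univ.image f = Finset.univ.erase k := by
    intro f hfix hfk
    ext m
    constructor
    · intro hmem
      obtain ⟨i, -, rfl⟩ := Finset.mem_image.mp hmem
      refine Finset.mem_erase.mpr ⟨?_, Finset.mem_univ _⟩
      by_cases hik : i = k
      · subst hik; exact hfk
      · rw [hfix i hik]; exact hik
    · intro hm
      have hmk := (Finset.mem_erase.mp hm).1
      exact Finset.mem_image.mpr ⟨m, Finset.mem_univ _, hfix m hmk⟩
  by_cases hk : (k : ℕ) + 1 < n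
  · refine ⟨fun i => if i = k then ⟨(k : ℕ) + 1, hk⟩ else i, ?_, ?_⟩
    · intro i j hij
      have hij' : (i : ℕ) ≤ (j : ℕ) := hij
      dsimp only
      by_cases hik : i = k <;> by_cases hjk : j = k
      · rw [if_pos hik, if_pos hjk]
      · rw [if_pos hik, if_neg hjk]
        have h1 : (i : ℕ) = (k : ℕ) := congrArg Fin.val hik
        have h2 : (j : ℕ) ≠ (k : ℕ) := hne _ _ hjk
        rw [Fin.le_def]
        simp only
        omega
      · rw [if_neg hik, if_pos hjk]
        have h1 : (j : ℕ) = (k : ℕ) := congrArg Fin.val hjk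
        rw [Fin.le_def]
        simp only
        omega
      · rw [if_neg hik, if_neg hjk]; exact hij
    · apply himage
      · intro i hik; rw [if_neg hik]
      · rw [if_pos rfl]
        intro h
        have := congrArg Fin.val h
        simp only at this
        omega
  · -- k is the last element; n ≥ 2 so (k:ℕ) ≥ 1
    have hklast : (k : ℕ) = n - 1 := by have := k.isLt; omega
    have hk1 : (k : ℕ) - 1 < n := by omega
    refine ⟨fun i => if i = k then ⟨(k : ℕ) - 1, hk1⟩ else i, ?_, ?_⟩
    · intro i j hij
      have hij' : (i : ℕ) ≤ (j : ℕ) := hij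
      dsimp only
      by_cases hik : i = k <;> by_cases hjk : j = k
      · rw [if_pos hik, if_pos hjk]
      · rw [if_pos hik, if_neg hjk]
        rw [Fin.le_def]
        simp only
        omega
      · rw [if_neg hik, if_pos hjk]
        have h1 : (j : ℕ) = (k : ℕ) := congrArg Fin.val hjk
        have h2 : (i : ℕ) ≠ (k : ℕ) := hne _ _ hik
        rw [Fin.le_def]
        simp only
        omega
      · rw [if_neg hik, if_neg hjk]; exact hij
    · apply himage
      · intro i hik; rw [if_neg hik]
      · rw [if_pos rfl]
        intro h
        have := congrArg Fin.val h
        simp only at this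
        omega

/-- For every `n ≥ 2`, the semigroup of all monotonic transformations of `Fin n`
cannot be generated by fewer than `n+1` elements: every set `S` of monotonic
transformations whose closure under composition is the set of all monotonic
transformations has cardinality at least `n+1`. -/
theorem monotone_semigroup_generators_min (n : ℕ) (hn : 2 ≤ n)
    (S : Set (Fin n → Fin n)) (hS : ∀ t ∈ S, Monotone t)
    (hgen : {t : Fin n → Fin n | GenBy S t} = {t : Fin n → Fin n | Monotone t}) :
    n + 1 ≤ S.ncard := by
  classical
  have hmono : ∀ t, GenBy S t → Monotone t := by
    intro t ht
    have : t ∈ {t : Fin n → Fin n | GenBy S t} := ht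
    rw [hgen] at this
    exact this
  have hgen' : ∀ t : Fin n → Fin n, Monotone t → GenBy S t := by
    intro t ht
    have : t ∈ {t : Fin n → Fin n | Monotone t} := ht
    rw [← hgen] at this
    exact this
  -- id ∈ S
  have hid : (id : Fin n → Fin n) ∈ S :=
    id_mem hS (hgen' id monotone_id) Function.injective_id
  -- for each k, a generator with image univ.erase k
  have hgens : ∀ k : Fin n, ∃ s ∈ S, Finset.univ.image s = Finset.univ.erase k := by
    intro k
    obtain ⟨f, hf, hfim⟩ := exists_mono_erase hn k
    have hcard : (Finset.univ.image f).card = n - 1 := by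
      rw [hfim, Finset.card_erase_of_mem (Finset.mem_univ k)]
      simp
    obtain ⟨s, hsS, hs⟩ := key_lemma hmono (hgen' f hf) hcard hn
    exact ⟨s, hsS, by rw [hs, hfim]⟩
  choose s hsS hsim using hgens
  -- build an injection Fin (n+1) → S
  set F : Fin (n + 1) → (Fin n → Fin n) :=
    fun j => if h : (j : ℕ) < n then s ⟨(j : ℕ), h⟩ else id with hF
  have hFrange : ∀ j, F j ∈ S := by
    intro j
    by_cases h : (j : ℕ) < n
    · simp only [hF]; rw [dif_pos h]; exact hsS _
    · simp only [hF]; rw [dif_neg h]; exact hid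
  have hFim : ∀ (j : Fin (n + 1)) (h : (j : ℕ) < n),
      Finset.univ.image (F j) = Finset.univ.erase (⟨(j : ℕ), h⟩ : Fin n) := by
    intro j h; simp only [hF]; rw [dif_pos h]; exact hsim _
  have hFid : ∀ (j : Fin (n + 1)), ¬ (j : ℕ) < n → F j = id := by
    intro j h; simp only [hF]; rw [dif_neg h]
  have hinj : Function.Injective F := by
    intro j1 j2 heq
    by_cases h1 : (j1 : ℕ) < n <;> by_cases h2 : (j2 : ℕ) < n
    · have hthis := hFim j1 h1
      rw [heq, hFim j2 h2] at hthis
      have hk : (⟨(j2 : ℕ), h2⟩ : Fin n) = ⟨(j1 : ℕ), h1⟩ := by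
        by_contra hne
        have hmem : (⟨(j1 : ℕ), h1⟩ : Fin n) ∈
            Finset.univ.erase (⟨(j1 : ℕ), h1⟩ : Fin n) := by
          rw [← hthis]
          exact Finset.mem_erase.mpr ⟨fun hc => hne hc.symm, Finset.mem_univ _⟩
        exact absurd hmem (Finset.notMem_erase _ _)
      have hval : (j1 : ℕ) = (j2 : ℕ) := by
        simpa using congrArg (fun x : Fin n => (x : ℕ)) hk.symm
      exact Fin.ext hval
    · exfalso
      have h1' := hFim j1 h1
      rw [heq, hFid j2 h2] at h1'
      have himg : Finset.univ.image (id : Fin n → Fin n) = Finset.univ := by simp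
      rw [himg] at h1'
      have hmem : (⟨(j1 : ℕ), h1⟩ : Fin n) ∈
          Finset.univ.erase (⟨(j1 : ℕ), h1⟩ : Fin n) := by
        rw [← h1']; exact Finset.mem_univ _
      exact absurd hmem (Finset.notMem_erase _ _)
    · exfalso
      have h2' := hFim j2 h2
      rw [← heq, hFid j1 h1] at h2'
      have himg : Finset.univ.image (id : Fin n → Fin n) = Finset.univ := by simp
      rw [himg] at h2'
      have hmem : (⟨(j2 : ℕ), h2⟩ : Fin n) ∈
          Finset.univ.erase (⟨(j2 : ℕ), h2⟩ : Fin n) := by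
        rw [← h2']; exact Finset.mem_univ _
      exact absurd hmem (Finset.notMem_erase _ _)
    · have := j1.isLt; have := j2.isLt
      exact Fin.ext (by omega)
  have hsub : Set.range F ⊆ S := by
    rintro _ ⟨j, rfl⟩; exact hFrange j
  have h1 : (Set.range F).ncard = n + 1 := by
    rw [← Set.image_univ, Set.ncard_image_of_injective _ hinj, Set.ncard_univ]
    simp
  calc n + 1 = (Set.range F).ncard := h1.symm
    _ ≤ S.ncard := Set.ncard_le_ncard hsub (Set.toFinite S)
end

section
/- For every n ≥ 1, the number of monotonic partial transformations of Fin n equals the sum over k from 0 to n of C(n,k)·C(n+k−1,k); that is, the cardinality of the set of functions p : Fin n → Option (Fin n) such that for all i ≤ j, whenever p i = some a and p j = some b one has a ≤ b, equals ∑_{k=0}^{n} C(n,k)·C(n+k−1,k). -/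
open Finset

section Aux

/-- Strictly monotone functions between `Fin` types grow at least linearly. -/
lemma strictMono_add_le {k m : ℕ} {g : Fin k → Fin m} (hg : StrictMono g)
    (i j : Fin k) (h : (i : ℕ) ≤ j) : (g i : ℕ) + ((j : ℕ) - i) ≤ g j := by
  obtain ⟨d, hd⟩ := Nat.le.dest h
  induction d generalizing j with
  | zero =>
    have : i = j := Fin.ext (by omega)
    subst this; omega
  | succ d ih =>
    have hjk : (i : ℕ) + d < k := by omega
    have h1 : (g i : ℕ) + (((⟨(i : ℕ) + d, hjk⟩ : Fin k) : ℕ) - i) ≤ g ⟨(i : ℕ) + d, hjk⟩ :=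
      ih ⟨(i : ℕ) + d, hjk⟩ (by simp) (by simp)
    have h2 : (g ⟨(i : ℕ) + d, hjk⟩ : ℕ) < g j :=
      hg (show (⟨(i : ℕ) + d, hjk⟩ : Fin k) < j from by
        simp only [Fin.lt_iff_val_lt_val]; omega)
    simp only at h1
    omega

/-- The number of strictly monotone functions `Fin k → Fin m` is `m.choose k`. -/
lemma card_strictMono_fin (k m : ℕ) :
    Nat.card {g : Fin k → Fin m // StrictMono g} = m.choose k := by
  classical
  have e : {g : Fin k → Fin m // StrictMono g} ≃ {s : Finset (Fin m) // s.card = k} :=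
  { toFun := fun g => ⟨Finset.univ.map ⟨g.1, g.2.injective⟩, by simp⟩
    invFun := fun s => ⟨s.1.orderEmbOfFin s.2, (s.1.orderEmbOfFin s.2).strictMono⟩
    left_inv := fun g => by
      apply Subtype.ext
      exact (Finset.orderEmbOfFin_unique _ (fun x => by simp) g.2).symm
    right_inv := fun s => by
      apply Subtype.ext
      have : ((Finset.univ.map ⟨((s.1.orderEmbOfFin s.2 : Fin k ↪o Fin m) : Fin k → Fin m),
          (s.1.orderEmbOfFin s.2).strictMono.injective⟩ : Finset (Fin m)) : Set (Fin m)) =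
          (s.1 : Set (Fin m)) := by
        simp only [Finset.coe_map, Finset.coe_univ, Set.image_univ, Function.Embedding.coeFn_mk]
        exact Finset.range_orderEmbOfFin s.1 s.2
      exact Finset.coe_inj.mp this }
  rw [Nat.card_congr e, Nat.card_eq_fintype_card, Fintype.card_subtype]
  have h2 : (Finset.univ.filter (fun s : Finset (Fin m) => s.card = k)) =
      (Finset.univ : Finset (Fin m)).powersetCard k := by
    rw [← Finset.powerset_univ, Finset.powersetCard_eq_filter]
  rw [h2, Finset.card_powersetCard, Finset.card_univ, Fintype.card_fin]

/-- The number of monotone functions `Fin k → Fin n` is `(n+k-1).choose k`, for `n ≥ 1`. -/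
lemma card_monotone_fin (n k : ℕ) (hn : 1 ≤ n) :
    Nat.card {f : Fin k → Fin n // Monotone f} = (n + k - 1).choose k := by
  have e : {f : Fin k → Fin n // Monotone f} ≃
      {g : Fin k → Fin (n + k - 1) // StrictMono g} :=
  { toFun := fun f => ⟨fun i => ⟨(f.1 i : ℕ) + i, by
        have h1 := (f.1 i).isLt; have h2 := i.isLt; omega⟩, by
      intro i j hij
      have h1 : (f.1 i : ℕ) ≤ f.1 j := f.2 hij.le
      simp only [Fin.lt_iff_val_lt_val] at hij ⊢
      omega⟩
    invFun := fun g => ⟨fun i => ⟨(g.1 i : ℕ) - i, by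
        have hkpos : 0 < k := i.pos
        have h1 := strictMono_add_le g.2 i ⟨k - 1, by omega⟩ (by simp; omega)
        have h2 := (g.1 ⟨k - 1, by omega⟩).isLt
        have h3 := i.isLt
        simp only at h1
        omega⟩, by
      intro i j hij
      have h1 := strictMono_add_le g.2 i j hij
      simp only [Fin.mk_le_mk]
      omega⟩
    left_inv := fun f => by
      apply Subtype.ext; funext i; apply Fin.ext; simp
    right_inv := fun g => by
      apply Subtype.ext; funext i; apply Fin.ext
      have hkpos : 0 < k := i.pos
      have h1 := strictMono_add_le g.2 ⟨0, hkpos⟩ i (Nat.zero_le _)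
      simp only at h1
      simp only
      omega }
  rw [Nat.card_congr e, card_strictMono_fin]

lemma nat_card_sigma {α : Type*} [Fintype α] (F : α → Type*) [∀ a, Finite (F a)] :
    Nat.card (Σ a, F a) = ∑ a, Nat.card (F a) := by
  classical
  have := fun a => Fintype.ofFinite (F a)
  simp [Nat.card_eq_fintype_card, Fintype.card_sigma]

end Aux

/-- A partial transformation `p : Fin n → Option (Fin n)` is monotonic if for
all `i ≤ j`, whenever `p i = some a` and `p j = some b`, then `a ≤ b`. -/
def MonoP {n : ℕ} (p : Fin n → Option (Fin n)) : Prop :=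
  ∀ i j : Fin n, i ≤ j → ∀ a b : Fin n, p i = some a → p j = some b → a ≤ b

section Main

variable {n : ℕ}

/-- The domain of a partial transformation. -/
def domP {n : ℕ} (p : Fin n → Option (Fin n)) : Finset (Fin n) :=
  Finset.univ.filter (fun i => (p i).isSome)

lemma mem_domP {p : Fin n → Option (Fin n)} {i : Fin n} :
    i ∈ domP p ↔ (p i).isSome = true := by simp [domP]

/-- The fiber of `domP` over `s` is equivalent to monotone functions `Fin s.card → Fin n`. -/
noncomputable def fiberEquiv (s : Finset (Fin n)) :
    {x : {p : Fin n → Option (Fin n) // MonoP p} // domP x.1 = s} ≃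
      {f : Fin s.card → Fin n // Monotone f} where
  toFun x := ⟨fun j => (x.1.1 (s.orderEmbOfFin rfl j)).get
      (mem_domP.mp ((Finset.ext_iff.mp x.2 _).mpr (Finset.orderEmbOfFin_mem s rfl j))), by
    intro j j' hj
    have hmem : ∀ j, (x.1.1 (s.orderEmbOfFin rfl j)).isSome = true :=
      fun j => mem_domP.mp ((Finset.ext_iff.mp x.2 _).mpr (Finset.orderEmbOfFin_mem s rfl j))
    exact x.1.2 _ _ ((s.orderEmbOfFin rfl).monotone hj) _ _
      (Option.some_get (hmem j)).symm (Option.some_get (hmem j')).symm⟩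
  invFun f := ⟨⟨fun i => if h : i ∈ s then some (f.1 ((s.orderIsoOfFin rfl).symm ⟨i, h⟩))
      else none, by
    intro i j hij a b ha hb
    by_cases hi : i ∈ s
    · by_cases hjs : j ∈ s
      · simp only [dif_pos hi, Option.some_inj] at ha
        simp only [dif_pos hjs, Option.some_inj] at hb
        subst ha; subst hb
        exact f.2 ((s.orderIsoOfFin rfl).symm.monotone
          (show (⟨i, hi⟩ : {x // x ∈ s}) ≤ ⟨j, hjs⟩ from hij))
      · simp [dif_neg hjs] at hb
    · simp [dif_neg hi] at ha⟩, by
    apply Finset.ext; intro i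
    rw [mem_domP]
    by_cases hi : i ∈ s <;> simp [hi]⟩
  left_inv x := by
    apply Subtype.ext; apply Subtype.ext; funext i
    by_cases hi : i ∈ s
    · have key : s.orderEmbOfFin rfl ((s.orderIsoOfFin rfl).symm ⟨i, hi⟩) = i := by
        rw [← Finset.coe_orderIsoOfFin_apply, OrderIso.apply_symm_apply]
      simp only [dif_pos hi, Option.some_get, key]
    · simp only [dif_neg hi]
      have hns : ¬ (x.1.1 i).isSome = true := fun h => hi ((Finset.ext_iff.mp x.2 i).mp (mem_domP.mpr h))
      cases h : x.1.1 i with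
      | none => rfl
      | some a => exact absurd (by simp [h]) hns
  right_inv f := by
    apply Subtype.ext; funext j
    have hmem : s.orderEmbOfFin rfl j ∈ s := Finset.orderEmbOfFin_mem s rfl j
    simp only [dif_pos hmem, Option.get_some]
    refine congrArg f.1 ?_
    apply (s.orderIsoOfFin rfl).injective
    apply Subtype.ext
    rw [OrderIso.apply_symm_apply]
    exact (Finset.coe_orderIsoOfFin_apply s rfl j).symm

end Main

/-- For every `n ≥ 1`, the number of monotonic partial transformations of `Fin n`
equals `∑_{k=0}^{n} C(n,k)·C(n+k-1,k)`. -/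
theorem card_monotone_partial_transformations (n : ℕ) (hn : 1 ≤ n) :
    Nat.card {p : Fin n → Option (Fin n) // MonoP p} =
      ∑ k ∈ Finset.range (n + 1), Nat.choose n k * Nat.choose (n + k - 1) k := by
  classical
  rw [Nat.card_congr (Equiv.sigmaFiberEquiv (fun x : {p : Fin n → Option (Fin n) // MonoP p} =>
    domP x.1)).symm, nat_card_sigma]
  have step : ∀ s : Finset (Fin n),
      Nat.card {x : {p : Fin n → Option (Fin n) // MonoP p} // domP x.1 = s} =
        (n + s.card - 1).choose s.card :=
    fun s => by rw [Nat.card_congr (fiberEquiv s), card_monotone_fin n s.card hn]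
  simp only [step]
  calc ∑ s : Finset (Fin n), (n + s.card - 1).choose s.card
      = ∑ s ∈ (Finset.univ : Finset (Fin n)).powerset, (n + s.card - 1).choose s.card := by
        rw [Finset.powerset_univ]
    _ = ∑ k ∈ Finset.range ((Finset.univ : Finset (Fin n)).card + 1),
          (Finset.univ : Finset (Fin n)).card.choose k • (n + k - 1).choose k :=
        Finset.sum_powerset_apply_card (fun k => (n + k - 1).choose k)
    _ = ∑ k ∈ Finset.range (n + 1), Nat.choose n k * Nat.choose (n + k - 1) k := by
        simp [Finset.card_univ, smul_eq_mul]
end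

section
/- For every n ≥ 2, the semigroup of all monotonic partial transformations of Fin n cannot be generated by fewer than 2n elements: every subset S of monotonic partial transformations of Fin n whose closure under Kleisli composition equals the set of all monotonic partial transformations of Fin n has cardinality at least 2n. -/
/-- `GenByP S p` means the partial transformation `p` belongs to the subsemigroup
(under Kleisli composition of `Option`-valued maps) generated by `S`. -/
inductive GenByP {n : ℕ} (S : Set (Fin n → Option (Fin n))) :
    (Fin n → Option (Fin n)) → Prop
  | base {p : Fin n → Option (Fin n)} : p ∈ S → GenByP S p
  | comp {p q : Fin n → Option (Fin n)} : GenByP S p → GenByP S q →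
      GenByP S (fun i => (p i).bind q)

namespace MPSGaux

variable {n : ℕ}

/-- The identity partial transformation. -/
def idP (n : ℕ) : Fin n → Option (Fin n) := fun i => some i

/-- "R-type A k": undefined exactly at `k`, injective where defined. -/
def TypeA (k : Fin n) (p : Fin n → Option (Fin n)) : Prop :=
  p k = none ∧ (∀ i : Fin n, i ≠ k → (p i).isSome) ∧
    (∀ i j c, p i = some c → p j = some c → i = j)

/-- "R-type B k k'": total, collapses exactly the pair `{k, k'}`. -/
def TypeB (k k' : Fin n) (p : Fin n → Option (Fin n)) : Prop :=
  (∀ i, (p i).isSome) ∧ p k = p k' ∧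
    (∀ i j, i ≠ j → p i = p j → (i = k ∧ j = k') ∨ (i = k' ∧ j = k))

theorem monoP_comp {p q : Fin n → Option (Fin n)} (hp : MonoP p) (hq : MonoP q) :
    MonoP (fun i => (p i).bind q) := by
  intro i j hij a b ha hb
  simp only [Option.bind_eq_some_iff] at ha hb
  obtain ⟨c, hc, hca⟩ := ha
  obtain ⟨d, hd, hdb⟩ := hb
  exact hq c d (hp i j hij c d hc hd) a b hca hdb

theorem gen_mono {S : Set (Fin n → Option (Fin n))} (hS : ∀ p ∈ S, MonoP p)
    {p : Fin n → Option (Fin n)} (hp : GenByP S p) : MonoP p := by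
  induction hp with
  | base h => exact hS _ h
  | comp _ _ ih1 ih2 => exact monoP_comp ih1 ih2

/-- A total injective monotone partial transformation is the identity. -/
theorem mono_total_inj {a : Fin n → Option (Fin n)} (ha : MonoP a)
    (htot : ∀ i, (a i).isSome)
    (hinj : ∀ i j c, a i = some c → a j = some c → i = j) : a = idP n := by
  set f : Fin n → Fin n := fun i => (a i).get (htot i) with hf
  have hfa : ∀ i, a i = some (f i) := fun i => (Option.some_get (htot i)).symm
  have hsm : StrictMono f := by
    intro i j hij
    have hle : f i ≤ f j := ha i j hij.le _ _ (hfa i) (hfa j)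
    rcases lt_or_eq_of_le hle with h | h
    · exact h
    · exact absurd (hinj i j (f j) (h ▸ hfa i) (hfa j)) hij.ne
  have hfinj : Function.Injective f := hsm.injective
  have hsurj : Function.Surjective f := Finite.surjective_of_injective hfinj
  have hfid : f = id := by
    have inst : WellFoundedLT (Fin n) := inferInstance
    have h := @StrictMono.range_inj (Fin n) (Fin n) _ _ inst f id hsm strictMono_id
    rw [← h, Set.range_id, Set.range_eq_univ]
    exact hsurj
  funext i
  rw [hfa i, hfid]
  rfl

/-- Factorization lemma for type A: if `a ∘ b` has type `A k` and `a` is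
monotone, then `a` is the identity or `a` itself has type `A k`. -/
theorem typeA_fact {k : Fin n} {a b : Fin n → Option (Fin n)} (ha : MonoP a)
    (h : TypeA k (fun i => (a i).bind b)) : a = idP n ∨ TypeA k a := by
  obtain ⟨h1, h2, h3⟩ := h
  simp only at h1 h2 h3
  have hatot : ∀ i : Fin n, i ≠ k → (a i).isSome := by
    intro i hi
    have := h2 i hi
    cases hai : a i with
    | none => rw [hai] at this; simp at this
    | some c => simp
  cases hak : a k with
  | none =>
    -- a has type A k
    right
    refine ⟨hak, hatot, ?_⟩
    intro i j c hi hj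
    by_cases hik : i = k
    · rw [hik, hak] at hi; exact absurd hi (by simp)
    by_cases hjk : j = k
    · rw [hjk, hak] at hj; exact absurd hj (by simp)
    · -- both defined in p, same value
      have hpi : (a i).bind b = b c := by rw [hi]; rfl
      have hpj : (a j).bind b = b c := by rw [hj]; rfl
      have hsome : ((a i).bind b).isSome := h2 i hik
      rw [hpi] at hsome
      obtain ⟨d, hd⟩ := Option.isSome_iff_exists.1 hsome
      exact h3 i j d (by rw [hpi, hd]) (by rw [hpj, hd])
  | some c =>
    -- a is total and injective, hence the identity
    left
    have htot : ∀ i, (a i).isSome := by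
      intro i
      by_cases hik : i = k
      · rw [hik, hak]; simp
      · exact hatot i hik
    refine mono_total_inj ha htot ?_
    intro i j d hi hj
    by_cases hik : i = k
    · by_cases hjk : j = k
      · rw [hik, hjk]
      · exfalso
        have hnone : b d = none := by
          have : (a k).bind b = none := h1
          rw [← hik, hi] at this
          exact this
        have : ((a j).bind b).isSome := h2 j hjk
        rw [hj] at this
        simp only [Option.bind_some, hnone] at this
        simp at this
    · by_cases hjk : j = k
      · exfalso
        have hnone : b d = none := by
          have : (a k).bind b = none := h1
          rw [← hjk, hj] at this
          exact this
        have : ((a i).bind b).isSome := h2 i hik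
        rw [hi] at this
        simp only [Option.bind_some, hnone] at this
        simp at this
      · have hpi : (a i).bind b = b d := by rw [hi]; rfl
        have hpj : (a j).bind b = b d := by rw [hj]; rfl
        have hsome : ((a i).bind b).isSome := h2 i hik
        rw [hpi] at hsome
        obtain ⟨e, he⟩ := Option.isSome_iff_exists.1 hsome
        exact h3 i j e (by rw [hpi, he]) (by rw [hpj, he])

/-- Factorization lemma for type B: if `a ∘ b` has type `B k k'` and `a` is
monotone, then `a` is the identity or `a` itself has type `B k k'`. -/
theorem typeB_fact {k k' : Fin n} {a b : Fin n → Option (Fin n)}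
    (ha : MonoP a) (h : TypeB k k' (fun i => (a i).bind b)) :
    a = idP n ∨ TypeB k k' a := by
  obtain ⟨h1, h2, h3⟩ := h
  simp only at h1 h2 h3
  have hatot : ∀ i : Fin n, (a i).isSome := by
    intro i
    have := h1 i
    cases hai : a i with
    | none => rw [hai] at this; simp at this
    | some c => simp
  have hcoll : ∀ i j : Fin n, i ≠ j → a i = a j →
      (i = k ∧ j = k') ∨ (i = k' ∧ j = k) := by
    intro i j hij hab
    exact h3 i j hij (by simp only [hab])
  by_cases hinj : ∀ i j c, a i = some c → a j = some c → i = j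
  · left; exact mono_total_inj ha hatot hinj
  · right
    push_neg at hinj
    obtain ⟨i, j, c, hi, hj, hij⟩ := hinj
    have hkk' : a k = a k' := by
      rcases hcoll i j hij (by rw [hi, hj]) with ⟨hik, hjk⟩ | ⟨hik, hjk⟩
      · rw [← hik, ← hjk, hi, hj]
      · rw [← hik, ← hjk, hi, hj]
    exact ⟨hatot, hkk', hcoll⟩

section Gen

variable {S : Set (Fin n → Option (Fin n))} (hS : ∀ p ∈ S, MonoP p)

include hS

theorem gen_id {p : Fin n → Option (Fin n)} (hp : GenByP S p) (hid : p = idP n) :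
    idP n ∈ S := by
  induction hp with
  | base h => exact hid ▸ h
  | @comp a b hga hgb iha ihb =>
    have ha : MonoP a := gen_mono hS hga
    have haid : a = idP n := by
      refine mono_total_inj ha ?_ ?_
      · intro i
        have : (a i).bind b = some i := congrFun hid i
        cases hai : a i with
        | none => rw [hai] at this; simp at this
        | some c => simp
      · intro i j c hi hj
        have h1 : (a i).bind b = some i := congrFun hid i
        have h2 : (a j).bind b = some j := congrFun hid j
        rw [hi] at h1
        rw [hj] at h2
        simp only [Option.bind_some] at h1 h2
        rw [h1] at h2
        exact Option.some_inj.1 h2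
    refine ihb ?_
    funext i
    have : (a i).bind b = idP n i := congrFun hid i
    rw [haid] at this
    exact this

theorem gen_typeA {k : Fin n} {p : Fin n → Option (Fin n)} (hp : GenByP S p)
    (ht : TypeA k p) : ∃ s ∈ S, TypeA k s := by
  induction hp with
  | base h => exact ⟨_, h, ht⟩
  | @comp a b hga hgb iha ihb =>
    have ha : MonoP a := gen_mono hS hga
    rcases typeA_fact ha ht with haid | hta
    · refine ihb ?_
      have heq : (fun i => (a i).bind b) = b := by
        funext i; rw [haid]; rfl
      rwa [heq] at ht
    · exact iha hta

theorem gen_typeB {k k' : Fin n} {p : Fin n → Option (Fin n)} (hp : GenByP S p)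
    (ht : TypeB k k' p) : ∃ s ∈ S, TypeB k k' s := by
  induction hp with
  | base h => exact ⟨_, h, ht⟩
  | @comp a b hga hgb iha ihb =>
    have ha : MonoP a := gen_mono hS hga
    rcases typeB_fact ha ht with haid | hta
    · refine ihb ?_
      have heq : (fun i => (a i).bind b) = b := by
        funext i; rw [haid]; rfl
      rwa [heq] at ht
    · exact iha hta

end Gen

/-- The canonical witness of type A k. -/
def pA (k : Fin n) : Fin n → Option (Fin n) := fun i => if i = k then none else some i

theorem pA_mono (k : Fin n) : MonoP (pA k) := by
  intro i j hij a b ha hb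
  unfold pA at ha hb
  by_cases hik : i = k
  · simp [hik] at ha
  by_cases hjk : j = k
  · simp [hjk] at hb
  simp [hik, hjk] at ha hb
  rw [← ha, ← hb]
  exact hij

theorem pA_typeA (k : Fin n) : TypeA k (pA k) := by
  refine ⟨by simp [pA], ?_, ?_⟩
  · intro i hi; simp [pA, hi]
  · intro i j c hi hj
    unfold pA at hi hj
    by_cases hik : i = k
    · simp [hik] at hi
    by_cases hjk : j = k
    · simp [hjk] at hj
    simp [hik, hjk] at hi hj
    rw [hi, hj]

/-- The canonical witness of type B k k⁺. -/
def pB (k k' : Fin n) : Fin n → Option (Fin n) :=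
  fun i => if i = k' then some k else some i

theorem pB_mono (k : Fin n) (hk : (k : ℕ) + 1 < n) :
    MonoP (pB k ⟨(k : ℕ) + 1, hk⟩) := by
  intro i j hij a b ha hb
  unfold pB at ha hb
  by_cases hik : i = ⟨(k : ℕ) + 1, hk⟩
  · by_cases hjk : j = ⟨(k : ℕ) + 1, hk⟩
    · simp [hik, hjk] at ha hb; rw [← ha, ← hb]
    · simp [hik, hjk] at ha hb
      rw [← ha, ← hb]
      have : ((k : ℕ) + 1) ≤ (j : ℕ) := by
        have := hij
        rw [hik] at this
        exact this
      show (k : ℕ) ≤ (j : ℕ)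
      omega
  · by_cases hjk : j = ⟨(k : ℕ) + 1, hk⟩
    · simp [hik, hjk] at ha hb
      rw [← ha, ← hb]
      have h1 : (i : ℕ) ≤ (k : ℕ) + 1 := by
        have := hij; rw [hjk] at this; exact this
      have h2 : (i : ℕ) ≠ (k : ℕ) + 1 := by
        intro hc
        exact hik (Fin.ext hc)
      show (i : ℕ) ≤ (k : ℕ)
      omega
    · simp [hik, hjk] at ha hb
      rw [← ha, ← hb]
      exact hij

theorem pB_typeB (k : Fin n) (hk : (k : ℕ) + 1 < n) :
    TypeB k ⟨(k : ℕ) + 1, hk⟩ (pB k ⟨(k : ℕ) + 1, hk⟩) := by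
  have hne : k ≠ ⟨(k : ℕ) + 1, hk⟩ := by
    intro hc
    have : (k : ℕ) = (k : ℕ) + 1 := congrArg Fin.val hc
    omega
  refine ⟨?_, ?_, ?_⟩
  · intro i
    unfold pB
    by_cases hik : i = ⟨(k : ℕ) + 1, hk⟩ <;> simp [hik]
  · simp [pB, hne]
  · intro i j hij hpij
    unfold pB at hpij
    by_cases hik : i = ⟨(k : ℕ) + 1, hk⟩
    · by_cases hjk : j = ⟨(k : ℕ) + 1, hk⟩
      · exact absurd (hik.trans hjk.symm) hij
      · simp [hik, hjk] at hpij
        right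
        exact ⟨hik, hpij.symm⟩
    · by_cases hjk : j = ⟨(k : ℕ) + 1, hk⟩
      · simp [hik, hjk] at hpij
        left
        exact ⟨hpij, hjk⟩
      · simp [hik, hjk] at hpij
        exact absurd hpij hij

theorem idP_mono : MonoP (idP n) := by
  intro i j hij a b ha hb
  simp only [idP, Option.some_inj] at ha hb
  rw [← ha, ← hb]; exact hij

-- Distinctness lemmas

theorem typeA_ne_typeA {k l : Fin n} {s : Fin n → Option (Fin n)}
    (h1 : TypeA k s) (h2 : TypeA l s) : k = l := by
  by_contra hq
  have := h2.2.1 k hq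
  rw [h1.1] at this
  simp at this

theorem typeA_ne_typeB {k l l' : Fin n} {s : Fin n → Option (Fin n)}
    (h1 : TypeA k s) (h2 : TypeB l l' s) : False := by
  have := h2.1 k
  rw [h1.1] at this
  simp at this

theorem typeA_ne_id {k : Fin n} (h1 : TypeA k (idP n)) : False := by
  have := h1.1
  simp [idP] at this

theorem typeB_ne_id {k k' : Fin n} (hkk : k ≠ k') (h : TypeB k k' (idP n)) :
    False := by
  have := h.2.1
  simp only [idP, Option.some_inj] at this
  exact hkk this

theorem typeB_ne_typeB {k k' l l' : Fin n} (hkk : k ≠ k')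
    {s : Fin n → Option (Fin n)} (h1 : TypeB k k' s) (h2 : TypeB l l' s) :
    (k = l ∧ k' = l') ∨ (k = l' ∧ k' = l) := by
  rcases h2.2.2 k k' hkk h1.2.1 with ⟨ha, hb⟩ | ⟨ha, hb⟩
  · exact Or.inl ⟨ha, hb⟩
  · exact Or.inr ⟨ha, hb⟩

end MPSGaux

open MPSGaux in
/-- For every `n ≥ 2`, the semigroup of all monotonic partial transformations of
`Fin n` cannot be generated by fewer than `2n` elements. -/
theorem monotone_partial_semigroup_generators_min (n : ℕ) (hn : 2 ≤ n)
    (S : Set (Fin n → Option (Fin n))) (hS : ∀ p ∈ S, MonoP p)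
    (hgen : {p : Fin n → Option (Fin n) | GenByP S p} =
      {p : Fin n → Option (Fin n) | MonoP p}) :
    2 * n ≤ S.ncard := by
  have hgen' : ∀ p : Fin n → Option (Fin n), MonoP p → GenByP S p := by
    intro p hp
    have : p ∈ {p : Fin n → Option (Fin n) | MonoP p} := hp
    rw [← hgen] at this
    exact this
  -- identity is in S
  have hid : idP n ∈ S := gen_id hS (hgen' _ idP_mono) rfl
  -- witnesses of type A
  have hA : ∀ k : Fin n, ∃ s ∈ S, TypeA k s := fun k =>
    gen_typeA hS (hgen' _ (pA_mono k)) (pA_typeA k)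
  -- witnesses of type B
  have hB : ∀ t : Fin (n - 1), ∃ s ∈ S,
      TypeB ⟨(t : ℕ), by omega⟩ ⟨(t : ℕ) + 1, by omega⟩ s := by
    intro t
    have ht : (t : ℕ) < n - 1 := t.isLt
    have hk : ((⟨(t : ℕ), by omega⟩ : Fin n) : ℕ) + 1 < n := by
      simp only []
      omega
    exact gen_typeB hS (hgen' _ (pB_mono ⟨(t : ℕ), by omega⟩ hk))
      (pB_typeB ⟨(t : ℕ), by omega⟩ hk)
  choose wA hwAS hwA using hA
  choose wB hwBS hwB using hB
  -- assemble an injective map into S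
  set w : Fin n ⊕ Fin (n - 1) ⊕ Unit → (Fin n → Option (Fin n)) :=
    Sum.elim wA (Sum.elim wB (fun _ => idP n)) with hw
  have hBne : ∀ t : Fin (n - 1),
      (⟨(t : ℕ), by omega⟩ : Fin n) ≠ ⟨(t : ℕ) + 1, by omega⟩ := by
    intro t hc
    have := congrArg Fin.val hc
    simp at this
  have hrange : Set.range w ⊆ S := by
    rintro x ⟨t, rfl⟩
    match t with
    | Sum.inl k => exact hwAS k
    | Sum.inr (Sum.inl t) => exact hwBS t
    | Sum.inr (Sum.inr _) => exact hid
  have hinj : Function.Injective w := by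
    intro t t' heq
    rw [hw] at heq
    match t, t' with
    | Sum.inl k, Sum.inl k' =>
      have h1 := hwA k
      have h2 := hwA k'
      simp only [Sum.elim_inl, Sum.elim_inr] at heq
      rw [heq] at h1
      exact congrArg Sum.inl (typeA_ne_typeA h1 h2)
    | Sum.inl k, Sum.inr (Sum.inl t') =>
      have h1 := hwA k
      simp only [Sum.elim_inl, Sum.elim_inr] at heq
      rw [heq] at h1
      exact absurd (typeA_ne_typeB h1 (hwB t')) id
    | Sum.inl k, Sum.inr (Sum.inr _) =>
      have h1 := hwA k
      simp only [Sum.elim_inl, Sum.elim_inr] at heq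
      rw [heq] at h1
      exact absurd (typeA_ne_id h1) id
    | Sum.inr (Sum.inl t'), Sum.inl k =>
      have h1 := hwA k
      simp only [Sum.elim_inl, Sum.elim_inr] at heq
      rw [← heq] at h1
      exact absurd (typeA_ne_typeB h1 (hwB t')) id
    | Sum.inr (Sum.inl t1), Sum.inr (Sum.inl t2) =>
      have h1 := hwB t1
      have h2 := hwB t2
      simp only [Sum.elim_inl, Sum.elim_inr] at heq
      rw [heq] at h1
      have := typeB_ne_typeB (hBne t1) h1 h2
      have hval : (t1 : ℕ) = (t2 : ℕ) := by
        rcases this with ⟨ha, _⟩ | ⟨ha, hb⟩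
        · simpa using congrArg Fin.val ha
        · have h3 : (t1 : ℕ) = (t2 : ℕ) + 1 := by simpa using congrArg Fin.val ha
          have h4 : (t1 : ℕ) + 1 = (t2 : ℕ) := by simpa using congrArg Fin.val hb
          omega
      exact congrArg _ (congrArg _ (Fin.ext hval))
    | Sum.inr (Sum.inl t1), Sum.inr (Sum.inr _) =>
      have h1 := hwB t1
      simp only [Sum.elim_inl, Sum.elim_inr] at heq
      rw [heq] at h1
      exact absurd (typeB_ne_id (hBne t1) h1) id
    | Sum.inr (Sum.inr _), Sum.inl k =>
      have h1 := hwA k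
      simp only [Sum.elim_inl, Sum.elim_inr] at heq
      rw [← heq] at h1
      exact absurd (typeA_ne_id h1) id
    | Sum.inr (Sum.inr _), Sum.inr (Sum.inl t1) =>
      have h1 := hwB t1
      simp only [Sum.elim_inl, Sum.elim_inr] at heq
      rw [← heq] at h1
      exact absurd (typeB_ne_id (hBne t1) h1) id
    | Sum.inr (Sum.inr _), Sum.inr (Sum.inr _) => rfl
  have hcard : (Set.range w).ncard = 2 * n := by
    rw [← Set.image_univ, Set.ncard_image_of_injective _ hinj, Set.ncard_univ,
      Nat.card_eq_fintype_card]
    simp [Fintype.card_sum]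
    omega
  calc 2 * n = (Set.range w).ncard := hcard.symm
    _ ≤ S.ncard := Set.ncard_le_ncard hrange S.toFinite
end

section
/- For every n ≥ 2, the set NM of nearly monotonic transformations of Fin n, defined as the union of the set CM of monotonic completed transformations of Fin n and the set of all constant transformations of Fin n, is closed under composition, every element of NM is aperiodic, and the cardinality of NM equals (∑_{k=0}^{n−1} C(n−1,k)·C(n+k−2,k)) + n − 1. -/
lemma smono_gap {k : ℕ} {v : Fin k → ℕ} (hv : StrictMono v) :
    ∀ (d : ℕ) (i j : Fin k), (j : ℕ) = i + d → v i + d ≤ v j := by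
  intro d
  induction d with
  | zero =>
    intro i j h
    have : i = j := Fin.ext (by omega)
    subst this; simp
  | succ d ih =>
    intro i j h
    have hj' : (i : ℕ) + d < k := by have := j.isLt; omega
    have h1 := ih i ⟨(i : ℕ) + d, hj'⟩ rfl
    have h2 : v ⟨(i : ℕ) + d, hj'⟩ < v j := hv (by simp [Fin.lt_def]; omega)
    omega

lemma fin_orderHom_card (M k : ℕ) :
    Nat.card (Fin k →o Fin (M + 1)) = (M + k).choose k := by
  classical
  -- map f to i ↦ f i + i, a strict mono into Fin (M + k)
  have hb : ∀ (f : Fin k →o Fin (M + 1)) (i : Fin k), ((f i : ℕ) + i) < M + k := by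
    intro f i
    have h1 := (f i).isLt
    have h2 := i.isLt
    omega
  set u : (Fin k →o Fin (M + 1)) → Fin k → Fin (M + k) :=
    fun f i => ⟨(f i : ℕ) + i, hb f i⟩ with hu
  have hsm : ∀ f, StrictMono (u f) := by
    intro f i j hij
    have := f.monotone hij.le
    simp only [hu, Fin.lt_def] at *
    omega
  -- bounds for the inverse
  have hge : ∀ (s : Finset (Fin (M + k))) (hs : s.card = k) (i : Fin k),
      (i : ℕ) ≤ s.orderEmbOfFin hs i := by
    intro s hs i
    have h0 : (0 : ℕ) < k := i.pos
    have h1 : ((s.orderEmbOfFin hs ⟨0, h0⟩ : Fin (M+k)) : ℕ) + (i : ℕ)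
        ≤ ((s.orderEmbOfFin hs i : Fin (M+k)) : ℕ) :=
      smono_gap (v := fun j => ((s.orderEmbOfFin hs j : Fin (M+k)) : ℕ))
        (fun a b hab => (s.orderEmbOfFin hs).strictMono hab) (i : ℕ) ⟨0, h0⟩ i (by simp)
    omega
  have hle : ∀ (s : Finset (Fin (M + k))) (hs : s.card = k) (i : Fin k),
      ((s.orderEmbOfFin hs i : Fin (M + k)) : ℕ) ≤ M + i := by
    intro s hs i
    have h0 : (0 : ℕ) < k := i.pos
    have hlast : (k - 1 : ℕ) < k := by omega
    have h1 : ((s.orderEmbOfFin hs i : Fin (M+k)) : ℕ) + ((k - 1 : ℕ) - i)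
        ≤ ((s.orderEmbOfFin hs ⟨k-1, hlast⟩ : Fin (M+k)) : ℕ) :=
      smono_gap (v := fun j => ((s.orderEmbOfFin hs j : Fin (M+k)) : ℕ))
        (fun a b hab => (s.orderEmbOfFin hs).strictMono hab) ((k - 1 : ℕ) - i) i ⟨k-1, hlast⟩
        (by simp; omega)
    have h2 := (s.orderEmbOfFin hs ⟨k-1, hlast⟩).isLt
    have h3 := i.isLt
    omega
  have E : (Fin k →o Fin (M + 1)) ≃ {s : Finset (Fin (M + k)) // s.card = k} := by
    refine ⟨fun f => ⟨Finset.image (u f) Finset.univ, ?_⟩,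
      fun s => ⟨fun i => ⟨(s.1.orderEmbOfFin s.2 i : ℕ) - i, ?_⟩, ?_⟩, ?_, ?_⟩
    · rw [Finset.card_image_of_injective _ (hsm f).injective, Finset.card_univ,
        Fintype.card_fin]
    · have := hle s.1 s.2 i; omega
    · intro i j hij
      have h1 : ((s.1.orderEmbOfFin s.2 i : Fin (M+k)) : ℕ) + ((j : ℕ) - i)
          ≤ ((s.1.orderEmbOfFin s.2 j : Fin (M+k)) : ℕ) :=
        smono_gap (v := fun j => ((s.1.orderEmbOfFin s.2 j : Fin (M+k)) : ℕ))
          (fun a b hab => (s.1.orderEmbOfFin s.2).strictMono hab) ((j : ℕ) - i) i j (by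
            have := (Fin.le_def.mp hij); omega)
      have h2 := hge s.1 s.2 i
      have h3 := hge s.1 s.2 j
      simp only [Fin.mk_le_mk]
      have := Fin.le_def.mp hij
      omega
    · intro f
      have key : (OrderEmbedding.ofStrictMono (u f) (hsm f)) =
          (Finset.image (u f) Finset.univ).orderEmbOfFin
            (by rw [Finset.card_image_of_injective _ (hsm f).injective, Finset.card_univ,
              Fintype.card_fin]) :=
        Finset.orderEmbOfFin_unique' _ (fun x => Finset.mem_image_of_mem _ (Finset.mem_univ x))
      ext i
      simp only [OrderHom.coe_mk]
      show (((Finset.image (u f) Finset.univ).orderEmbOfFin _ i : Fin (M+k)) : ℕ) - i = f i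
      rw [← key]
      simp [hu]
    · rintro ⟨s, hs⟩
      apply Subtype.ext
      simp only
      ext a
      simp only [Finset.mem_image, Finset.mem_univ, true_and]
      constructor
      · rintro ⟨i, rfl⟩
        have h1 := hge s hs i
        have h2 := Finset.orderEmbOfFin_mem s hs i
        convert h2 using 1
        apply Fin.ext
        simp [hu]
        erw [OrderHom.coe_mk]; dsimp only
        omega
      · intro ha
        have : a ∈ Set.range (s.orderEmbOfFin hs) := by
          rw [Finset.range_orderEmbOfFin]; exact ha
        obtain ⟨i, rfl⟩ := this
        refine ⟨i, ?_⟩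
        have h1 := hge s hs i
        apply Fin.ext; simp [hu]; erw [OrderHom.coe_mk]; dsimp only; omega
  rw [Nat.card_congr E, Nat.card_eq_fintype_card, Fintype.card_subtype]
  have : Finset.univ.filter (fun s : Finset (Fin (M+k)) => s.card = k)
      = Finset.powersetCard k Finset.univ := by
    ext s; simp [Finset.mem_powersetCard_univ]
  rw [this, Finset.card_powersetCard, Finset.card_univ, Fintype.card_fin]

lemma card_CM (M : ℕ) (T : Fin (M + 2)) (hT : (T : ℕ) = M + 1) :
    Nat.card ({t : Fin (M+2) → Fin (M+2) | t T = T ∧ ∀ i j : Fin (M+2), i ≤ j → i < T → j < T →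
        t i ≠ T → t j ≠ T → t i ≤ t j} : Set (Fin (M+2) → Fin (M+2))) =
      ∑ k ∈ Finset.range (M + 2), (M + 1).choose k * (M + k).choose k := by
  classical
  set CM : Set (Fin (M+2) → Fin (M+2)) :=
    {t : Fin (M+2) → Fin (M+2) | t T = T ∧ ∀ i j : Fin (M+2), i ≤ j → i < T → j < T →
        t i ≠ T → t j ≠ T → t i ≤ t j} with hCM
  let e : Fin (M+1) → Fin (M+2) := fun i => ⟨(i : ℕ), by omega⟩
  have heT : ∀ i : Fin (M+1), e i ≠ T := by
    intro i
    simp only [e, Fin.ne_iff_vne, hT]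
    have := i.isLt
    simp; omega
  have heltT : ∀ i : Fin (M+1), e i < T := by
    intro i
    simp only [e, Fin.lt_def, hT]
    exact i.isLt
  have he_mono : ∀ {x y : Fin (M+1)}, x ≤ y → e x ≤ e y := by
    intro x y hxy
    simp only [e, Fin.mk_le_mk]
    exact hxy
  have hne_lt : ∀ a : Fin (M+2), a ≠ T → (a : ℕ) < M + 1 := by
    intro a ha
    have h1 := a.isLt
    rw [Fin.ne_iff_vne, hT] at ha
    omega
  let φ : CM → Finset (Fin (M+1)) := fun t => Finset.univ.filter (fun i => t.1 (e i) ≠ T)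
  haveI : Fintype CM := Fintype.ofFinite _
  have key : ∀ S : Finset (Fin (M+1)),
      Nat.card {t : CM // φ t = S} = (M + S.card).choose S.card := by
    intro S
    rw [← fin_orderHom_card M S.card]
    refine Nat.card_congr ?_
    set ι := S.orderIsoOfFin rfl with hι
    have hmem : ∀ (t : CM) (h : φ t = S) (j : Fin S.card), t.1 (e ((ι j : Fin (M+1)))) ≠ T := by
      intro t h j
      have : ((ι j : Fin (M+1))) ∈ φ t := by rw [h]; exact (ι j).2
      simpa only [φ, Finset.mem_filter, Finset.mem_univ, true_and] using this
    refine ⟨fun tp => ⟨fun j => ⟨(tp.1.1 (e ((ι j : Fin (M+1)))) : ℕ),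
        hne_lt _ (hmem tp.1 tp.2 j)⟩, ?_⟩,
      fun g => ⟨⟨fun a =>
        if h : (a : ℕ) < M + 1 then
          (if hS : (⟨(a : ℕ), h⟩ : Fin (M+1)) ∈ S then e (g (ι.symm ⟨⟨(a : ℕ), h⟩, hS⟩)) else T)
        else T, ?_, ?_⟩, ?_⟩, ?_, ?_⟩
    · -- monotonicity of toFun
      intro j j' hjj'
      have h1 : (ι j : Fin (M+1)) ≤ (ι j' : Fin (M+1)) := Subtype.coe_le_coe.mpr (ι.monotone hjj')
      have h2 : e (ι j : Fin (M+1)) ≤ e (ι j' : Fin (M+1)) := by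
        simp only [e, Fin.mk_le_mk]; exact h1
      have h3 := tp.1.2.2 _ _ h2 (heltT _) (heltT _) (hmem tp.1 tp.2 j) (hmem tp.1 tp.2 j')
      simp only [Fin.mk_le_mk]
      exact Fin.le_def.mp h3
    · -- t T = T
      have h : ¬ ((T : ℕ) < M + 1) := by omega
      exact dif_neg h
    · -- monotone condition for invFun
      intro i j hij hiT hjT hti htj
      have hi : (i : ℕ) < M + 1 := by rw [Fin.lt_def, hT] at hiT; exact hiT
      have hj : (j : ℕ) < M + 1 := by rw [Fin.lt_def, hT] at hjT; exact hjT
      simp only [dif_pos hi] at hti ⊢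
      simp only [dif_pos hj] at htj ⊢
      by_cases hiS : (⟨(i : ℕ), hi⟩ : Fin (M+1)) ∈ S
      · rw [dif_pos hiS] at hti ⊢
        by_cases hjS : (⟨(j : ℕ), hj⟩ : Fin (M+1)) ∈ S
        · rw [dif_pos hjS] at htj ⊢
          have hsub : (⟨⟨(i : ℕ), hi⟩, hiS⟩ : {x // x ∈ S}) ≤ ⟨⟨(j : ℕ), hj⟩, hjS⟩ := by
            simp only [Subtype.mk_le_mk, Fin.mk_le_mk]
            exact Fin.le_def.mp hij
          exact he_mono (g.monotone (ι.symm.monotone hsub))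
        · rw [dif_neg hjS] at htj
          exact absurd rfl htj
      · rw [dif_neg hiS] at hti
        exact absurd rfl hti
    · -- φ (invFun g) = S
      ext i
      simp only [φ, Finset.mem_filter, Finset.mem_univ, true_and]
      have hi : ((e i : Fin (M+2)) : ℕ) < M + 1 := i.isLt
      simp only [dif_pos hi, Fin.eta]
      by_cases hiS : i ∈ S
      · rw [dif_pos hiS]
        simp only [hiS, iff_true]
        exact heT _
      · rw [dif_neg hiS]
        simp [hiS]
    · -- left inverse
      rintro ⟨⟨t, htCM⟩, hφ⟩
      apply Subtype.ext
      apply Subtype.ext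
      funext a
      simp only
      by_cases ha : (a : ℕ) < M + 1
      · rw [dif_pos ha]
        have hea : e ⟨(a : ℕ), ha⟩ = a := by apply Fin.ext; rfl
        by_cases haS : (⟨(a : ℕ), ha⟩ : Fin (M+1)) ∈ S
        · rw [dif_pos haS]
          apply Fin.ext
          erw [OrderHom.coe_mk]
          simp [OrderHom.coe_mk, e, OrderIso.apply_symm_apply, hea]
        · rw [dif_neg haS]
          have hne : ¬ (t (e ⟨(a : ℕ), ha⟩) ≠ T) := by
            intro hne
            exact haS (by rw [← hφ]; simp only [φ, Finset.mem_filter, Finset.mem_univ, true_and]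
                          exact hne)
          rw [hea] at hne
          push_neg at hne
          exact hne.symm
      · rw [dif_neg ha]
        have hTa : a = T := by apply Fin.ext; have := a.isLt; omega
        rw [hTa, htCM.1]
    · -- right inverse
      intro g
      apply OrderHom.ext
      funext j
      simp only [OrderHom.coe_mk]
      have hj : ((e ((ι j : Fin (M+1))) : Fin (M+2)) : ℕ) < M + 1 := (ι j : Fin (M+1)).isLt
      erw [OrderHom.coe_mk]
      simp only [e, dif_pos hj, Fin.eta, Subtype.coe_eta]
      simp only [dif_pos (ι j).2, OrderIso.symm_apply_apply]
  -- assemble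
  rw [Nat.card_eq_fintype_card, Fintype.card_congr (Equiv.sigmaFiberEquiv φ).symm,
    Fintype.card_sigma]
  have : ∀ S : Finset (Fin (M+1)),
      Fintype.card {t : CM // φ t = S} = (M + S.card).choose S.card := by
    intro S; rw [← Nat.card_eq_fintype_card]; exact key S
  rw [Finset.sum_congr rfl (fun S _ => this S)]
  rw [← Finset.powerset_univ, Finset.sum_powerset_apply_card (fun c => (M + c).choose c)
    (x := (Finset.univ : Finset (Fin (M+1))))]
  simp [Finset.card_univ, mul_comm]

/-- For every `n ≥ 2`, the set `NM` of nearly monotonic transformations of `Fin n`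
(the union of the monotonic completed transformations `CM` and the constant
transformations) is closed under composition, consists of aperiodic
transformations, and has cardinality `(∑_{k=0}^{n-1} C(n-1,k)·C(n+k-2,k)) + n - 1`. -/
theorem nearly_monotonic_closed_aperiodic_card (n : ℕ) (hn : 2 ≤ n) :
    let T : Fin n := ⟨n - 1, by omega⟩
    let CM : Set (Fin n → Fin n) :=
      {t | t T = T ∧ ∀ i j : Fin n, i ≤ j → i < T → j < T →
        t i ≠ T → t j ≠ T → t i ≤ t j}
    let NM : Set (Fin n → Fin n) :=
      CM ∪ {t | ∃ c : Fin n, t = Function.const (Fin n) c}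
    (∀ t ∈ NM, ∀ u ∈ NM, u ∘ t ∈ NM) ∧
    (∀ t ∈ NM, Aperiodic' t) ∧
    Nat.card NM =
      (∑ k ∈ Finset.range n, Nat.choose (n - 1) k * Nat.choose (n + k - 2) k)
        + n - 1 := by
  obtain ⟨M, rfl⟩ : ∃ M, n = M + 2 := ⟨n - 2, by omega⟩
  intro T CM NM
  have hTval : (T : ℕ) = M + 1 := rfl
  have hmemCM : ∀ t : Fin (M+2) → Fin (M+2), t ∈ CM ↔
      (t T = T ∧ ∀ i j : Fin (M+2), i ≤ j → i < T → j < T →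
        t i ≠ T → t j ≠ T → t i ≤ t j) := fun t => Iff.rfl
  have hmemNM : ∀ t : Fin (M+2) → Fin (M+2), t ∈ NM ↔
      (t ∈ CM ∨ ∃ c : Fin (M+2), t = Function.const (Fin (M+2)) c) := fun t => Iff.rfl
  have hlt : ∀ a : Fin (M+2), a ≠ T → a < T := by
    intro a ha
    rw [Fin.lt_def, hTval]
    rw [Fin.ne_iff_vne, hTval] at ha
    have := a.isLt
    omega
  refine ⟨?_, ?_, ?_⟩
  · -- closure under composition
    intro t ht u hu
    rw [hmemNM] at ht hu ⊢
    rcases hu with hu | ⟨c, rfl⟩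
    · rcases ht with ht | ⟨c, rfl⟩
      · rw [hmemCM] at ht hu
        left
        rw [hmemCM]
        constructor
        · show u (t T) = T
          rw [ht.1, hu.1]
        · intro i j hij hiT hjT hti htj
          simp only [Function.comp_apply] at hti htj ⊢
          have h1 : t i ≠ T := fun h => hti (by rw [h, hu.1])
          have h2 : t j ≠ T := fun h => htj (by rw [h, hu.1])
          exact hu.2 _ _ (ht.2 i j hij hiT hjT h1 h2) (hlt _ h1) (hlt _ h2) hti htj
      · right
        exact ⟨u c, rfl⟩
    · right
      exact ⟨c, rfl⟩
  · -- aperiodicity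
    intro t ht
    rw [hmemNM] at ht
    rcases ht with ht | ⟨c, rfl⟩
    · rw [hmemCM] at ht
      intro x k hk hx
      by_cases hall : ∀ i : ℕ, t^[i] x ≠ T
      · have hltT : ∀ i : ℕ, t^[i] x < T := fun i => hlt _ (hall i)
        have hstep_up : ∀ i : ℕ, t^[i] x ≤ t^[i+1] x → t^[i+1] x ≤ t^[i+2] x := by
          intro i h
          have h1 : t (t^[i] x) ≠ T := by
            rw [← Function.iterate_succ_apply' t i]; exact hall (i+1)
          have h2 : t (t^[i+1] x) ≠ T := by
            rw [← Function.iterate_succ_apply' t (i+1)]; exact hall (i+2)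
          have := ht.2 _ _ h (hltT i) (hltT (i+1)) h1 h2
          rwa [← Function.iterate_succ_apply' t i, ← Function.iterate_succ_apply' t (i+1)]
            at this
        have hstep_down : ∀ i : ℕ, t^[i+1] x ≤ t^[i] x → t^[i+2] x ≤ t^[i+1] x := by
          intro i h
          have h1 : t (t^[i+1] x) ≠ T := by
            rw [← Function.iterate_succ_apply' t (i+1)]; exact hall (i+2)
          have h2 : t (t^[i] x) ≠ T := by
            rw [← Function.iterate_succ_apply' t i]; exact hall (i+1)
          have := ht.2 _ _ h (hltT (i+1)) (hltT i) h1 h2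
          rwa [← Function.iterate_succ_apply' t i, ← Function.iterate_succ_apply' t (i+1)]
            at this
        rcases lt_trichotomy (t x) x with hlt' | heq | hgt
        · have chain : ∀ i : ℕ, t^[i+1] x ≤ t^[i] x := by
            intro i
            induction i with
            | zero => simpa using hlt'.le
            | succ i ih => exact hstep_down i ih
          have chain2 : ∀ i : ℕ, t^[i+1] x ≤ t x := by
            intro i
            induction i with
            | zero => simp
            | succ i ih => exact le_trans (chain (i+1)) ih
          have h3 := chain2 (k-1)
          rw [show k - 1 + 1 = k by omega, hx] at h3
          exact absurd (h3.trans_lt hlt') (lt_irrefl x)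
        · exact heq
        · have chain : ∀ i : ℕ, t^[i] x ≤ t^[i+1] x := by
            intro i
            induction i with
            | zero => simpa using hgt.le
            | succ i ih => exact hstep_up i ih
          have chain2 : ∀ i : ℕ, t x ≤ t^[i+1] x := by
            intro i
            induction i with
            | zero => simp
            | succ i ih => exact le_trans ih (chain (i+1))
          have h3 := chain2 (k-1)
          rw [show k - 1 + 1 = k by omega, hx] at h3
          exact absurd (hgt.trans_le h3) (lt_irrefl x)
      · push_neg at hall
        obtain ⟨i, hi⟩ := hall
        have hN : t^[k * (i+1)] x = x := by
          rw [Function.iterate_mul]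
          exact Function.iterate_fixed hx (i+1)
        have hle : i + 1 ≤ k * (i+1) := Nat.le_mul_of_pos_left _ (by omega)
        have h2 : t^[k * (i+1)] x = T := by
          rw [show k * (i+1) = (k * (i+1) - i) + i by omega, Function.iterate_add_apply, hi]
          exact Function.iterate_fixed ht.1 _
        have hxT : x = T := by rw [← hN, h2]
        rw [hxT]
        exact ht.1
    · -- constant
      intro x k hk hx
      have hck : (Function.const (Fin (M+2)) c)^[k] x = c := by
        cases k with
        | zero => omega
        | succ k => rw [Function.iterate_succ_apply']; rfl
      have : c = x := by rw [← hx, hck]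
      exact this
  · -- cardinality
    have hconstT : Function.const (Fin (M+2)) T ∈ CM := by
      rw [hmemCM]
      refine ⟨rfl, ?_⟩
      intro i j _ _ _ hti _
      exact absurd rfl hti
    set D : Set (Fin (M+2) → Fin (M+2)) :=
      {t | ∃ c : Fin (M+2), c ≠ T ∧ t = Function.const (Fin (M+2)) c} with hD
    have hNM : NM = CM ∪ D := by
      ext t
      rw [hmemNM]
      constructor
      · rintro (h | ⟨c, rfl⟩)
        · exact Or.inl h
        · by_cases hc : c = T
          · exact Or.inl (hc ▸ hconstT)
          · exact Or.inr ⟨c, hc, rfl⟩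
      · rintro (h | ⟨c, _, rfl⟩)
        · exact Or.inl h
        · exact Or.inr ⟨c, rfl⟩
    have hdisj : Disjoint CM D := by
      rw [Set.disjoint_left]
      rintro t ht ⟨c, hc, rfl⟩
      rw [hmemCM] at ht
      exact hc ht.1
    have hinj : Function.Injective (fun c : Fin (M+2) => Function.const (Fin (M+2)) c) :=
      fun a b h => congrFun h T
    have hDcard : D.ncard = M + 1 := by
      have hDim : D = (fun c : Fin (M+2) => Function.const (Fin (M+2)) c) '' {T}ᶜ := by
        ext t
        constructor
        · rintro ⟨c, hc, rfl⟩
          exact ⟨c, hc, rfl⟩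
        · rintro ⟨c, hc, rfl⟩
          exact ⟨c, hc, rfl⟩
      rw [hDim, Set.ncard_image_of_injective _ hinj, Set.compl_eq_univ_diff,
        Set.ncard_diff (Set.subset_univ _), Set.ncard_univ, Set.ncard_singleton,
        Nat.card_eq_fintype_card, Fintype.card_fin]
      omega
    have hCMcard : CM.ncard = ∑ k ∈ Finset.range (M + 2), (M+1).choose k * (M + k).choose k := by
      rw [← Nat.card_coe_set_eq]
      exact card_CM M T hTval
    have htot : Nat.card NM = (∑ k ∈ Finset.range (M + 2),
        (M+1).choose k * (M + k).choose k) + (M + 1) := by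
      rw [Nat.card_coe_set_eq, hNM,
        Set.ncard_union_eq hdisj (Set.toFinite _) (Set.toFinite _), hCMcard, hDcard]
    rw [htot]
    have hsum : ∑ k ∈ Finset.range (M + 2), (M + 2 - 1).choose k * (M + 2 + k - 2).choose k
        = ∑ k ∈ Finset.range (M + 2), (M+1).choose k * (M + k).choose k := by
      refine Finset.sum_congr rfl ?_
      intro k _
      have e1 : M + 2 - 1 = M + 1 := rfl
      have e2 : M + 2 + k - 2 = M + k := by omega
      rw [e1, e2]
    rw [hsum]
    omega
end

section
/- For every n ≥ 1 there exists a DFA M over an alphabet with n+1 letters, with state type Fin n, such that: every state is reachable from the start state by some word; any two distinct states are distinguishable (for distinct states p, q there is a word w such that exactly one of M.evalFrom p w and M.evalFrom q w is accepting); for every word w the transformation q ↦ M.evalFrom q w is monotonic; and the set { f : Fin n → Fin n | ∃ w ≠ [], f = fun q => M.evalFrom q w } has cardinality exactly C(2n−1, n). -/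
set_option maxHeartbeats 1000000

namespace MonoDFA

def uu (n : ℕ) : Fin n → Fin n := fun q => ⟨min (q.val + 1) (n - 1), by have := q.isLt; omega⟩

def tt (n j : ℕ) : Fin n → Fin n := fun q =>
  if h : q.val = j + 1 then ⟨j, by have := q.isLt; omega⟩ else q

def stepF (n : ℕ) (q : Fin n) (a : Fin (n + 1)) : Fin n :=
  if a.val = 0 then q else if a.val = n then uu n q else tt n (a.val - 1) q

def M (n : ℕ) (hn : 0 < n) : DFA (Fin (n + 1)) (Fin n) :=
  { step := stepF n, start := ⟨0, hn⟩, accept := {q | q.val = 0} }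

lemma uu_mono (n : ℕ) : Monotone (uu n) := by
  intro p q hpq
  have hv : p.val ≤ q.val := hpq
  simp only [uu, Fin.mk_le_mk]
  omega

lemma tt_mono (n j : ℕ) : Monotone (tt n j) := by
  intro p q hpq
  have hv : p.val ≤ q.val := hpq
  simp only [tt]
  split_ifs with h1 h2 <;> simp only [Fin.mk_le_mk, Fin.le_def] <;> omega

lemma step_mono (n : ℕ) (a : Fin (n + 1)) : Monotone (fun q => stepF n q a) := by
  unfold stepF
  split_ifs with h1 h2
  · exact fun p q h => h
  · exact uu_mono n
  · exact tt_mono n _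

lemma evalFrom_cons (n : ℕ) (hn : 0 < n) (q : Fin n) (a : Fin (n+1)) (w : List (Fin (n+1))) :
    (M n hn).evalFrom q (a :: w) = (M n hn).evalFrom (stepF n q a) w := rfl

lemma eval_mono (n : ℕ) (hn : 0 < n) (w : List (Fin (n + 1))) :
    Monotone (fun q => (M n hn).evalFrom q w) := by
  induction w with
  | nil => exact fun p q h => h
  | cons a w ih => exact fun p q h => ih (step_mono n a h)

lemma realize_id (n : ℕ) (hn : 0 < n) (g : Fin n → Fin n) (hid : ∀ x, g x = x) :
    ∃ w, ∀ q, (M n hn).evalFrom q w = g q :=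
  ⟨[], fun q => (hid q).symm⟩

lemma realize_le_id (n : ℕ) (hn : 0 < n) :
    ∀ N (g : Fin n → Fin n), Monotone g → (∀ x, (g x).val ≤ x.val) →
    (∑ x : Fin n, (x.val - (g x).val)) ≤ N →
    ∃ w, ∀ q, (M n hn).evalFrom q w = g q := by
  intro N
  induction N with
  | zero =>
    intro g hmono hle hsum
    refine realize_id n hn g (fun x => ?_)
    have h0 : ∀ x ∈ Finset.univ, (x.val - (g x).val) = 0 := by
      intro x _
      have := Finset.sum_eq_zero_iff.mp (Nat.le_zero.mp hsum)
      exact this x (Finset.mem_univ x)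
    have := h0 x (Finset.mem_univ x)
    have := hle x
    exact Fin.ext (by omega)
  | succ N ih =>
    intro g hmono hle hsum
    by_cases hid : ∀ x, g x = x
    · exact realize_id n hn g hid
    · push_neg at hid
      obtain ⟨x₁, hx₁⟩ := hid
      have hE : (Finset.univ.filter (fun x : Fin n => (g x).val < x.val)).Nonempty := by
        refine ⟨x₁, Finset.mem_filter.mpr ⟨Finset.mem_univ _, ?_⟩⟩
        have := hle x₁
        rcases lt_or_eq_of_le this with h | h
        · exact h
        · exact absurd (Fin.ext h) hx₁
      set E := Finset.univ.filter (fun x : Fin n => (g x).val < x.val) with hEdef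
      set x₀ := E.max' hE with hx₀def
      have hx₀E : x₀ ∈ E := E.max'_mem hE
      have hx₀lt : (g x₀).val < x₀.val := (Finset.mem_filter.mp hx₀E).2
      obtain ⟨j, hjdef⟩ : ∃ j, (g x₀).val = j := ⟨_, rfl⟩
      rw [hjdef] at hx₀lt
      have hjn : j + 1 < n := by have := x₀.isLt; omega
      -- key2: j+1 is not in the image of g
      have key2 : ∀ y : Fin n, (g y).val ≠ j + 1 := by
        intro y hy
        have hyx₀ : x₀ < y := by
          by_contra h
          push_neg at h
          have := hmono h
          have : (g y).val ≤ (g x₀).val := this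
          omega
        have hyE : y ∉ E := fun hmem => absurd (E.le_max' y hmem) (not_le.mpr hyx₀)
        have : ¬ ((g y).val < y.val) := by
          intro h
          exact hyE (Finset.mem_filter.mpr ⟨Finset.mem_univ _, h⟩)
        have hgyy : (g y).val = y.val := by have := hle y; omega
        have : x₀.val < y.val := hyx₀
        omega
      -- the bumped function
      set g' : Fin n → Fin n := fun x =>
        if h : (g x).val = j ∧ j < x.val then ⟨j + 1, by have := x.isLt; omega⟩ else g x
        with hg'def
      have hg'le : ∀ x, (g' x).val ≤ x.val := by
        intro x
        simp only [hg'def]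
        split_ifs with h
        · simp; omega
        · exact hle x
      have hg'mono : Monotone g' := by
        intro p q hpq
        have hv : p.val ≤ q.val := hpq
        have hg : (g p).val ≤ (g q).val := hmono hpq
        simp only [hg'def]
        split_ifs with h1 h2 h2 <;> simp only [Fin.mk_le_mk, Fin.le_def] <;> try omega
        all_goals {
          first
          | omega
          | · have : (g q).val ≠ j := by
                intro he
                exact h2 ⟨he, by omega⟩
              omega }
      have hsum' : (∑ x : Fin n, (x.val - (g' x).val)) ≤ N := by
        have hlt : (∑ x : Fin n, (x.val - (g' x).val)) < ∑ x : Fin n, (x.val - (g x).val) := by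
          apply Finset.sum_lt_sum
          · intro i _
            simp only [hg'def]
            split_ifs with h
            · simp only [Fin.val_mk]; omega
            · omega
          · refine ⟨x₀, Finset.mem_univ _, ?_⟩
            simp only [hg'def]
            split_ifs with h
            · simp only [Fin.val_mk]; omega
            · exact absurd ⟨hjdef, hx₀lt⟩ h
        omega
      obtain ⟨w', hw'⟩ := ih g' hg'mono hg'le hsum'
      have h_tt : ∀ x, tt n j (g' x) = g x := by
        intro x
        by_cases h : (g x).val = j ∧ j < x.val
        · have h1 : g' x = ⟨j + 1, by have := x.isLt; omega⟩ := by
            simp only [hg'def]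
            exact dif_pos h
          rw [h1]
          simp only [tt]
          rw [dif_pos (by simp)]
          exact Fin.ext (by simp [h.1])
        · have h1 : g' x = g x := by
            simp only [hg'def]
            exact dif_neg h
          rw [h1]
          simp only [tt]
          rw [dif_neg (key2 x)]
      refine ⟨w' ++ [⟨j + 1, by omega⟩], fun q => ?_⟩
      rw [DFA.evalFrom_of_append, hw' q]
      show stepF n (g' q) ⟨j + 1, _⟩ = g q
      unfold stepF
      rw [if_neg (by simp), if_neg (by simp; omega)]
      simpa using h_tt q

lemma realize_u_pow (n : ℕ) (hn : 0 < n) : ∀ (k : ℕ) (q : Fin n),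
    (M n hn).evalFrom q (List.replicate k ⟨n, by omega⟩) =
      ⟨min (q.val + k) (n - 1), by have := q.isLt; omega⟩ := by
  intro k
  induction k with
  | zero =>
    intro q
    apply Fin.ext
    have := q.isLt
    simp; omega
  | succ k ih =>
    intro q
    rw [List.replicate_succ, evalFrom_cons]
    have hstep : stepF n q ⟨n, by omega⟩ = uu n q := by
      unfold stepF
      rw [if_neg (by simp; omega), if_pos rfl]
    rw [hstep, ih]
    apply Fin.ext
    have := q.isLt
    simp only [uu, Fin.val_mk]
    omega

theorem realize_of_monotone (n : ℕ) (hn : 0 < n) (f : Fin n → Fin n) (hf : Monotone f) :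
    ∃ w, w ≠ [] ∧ ∀ q, (M n hn).evalFrom q w = f q := by
  haveI : Nonempty (Fin n) := ⟨⟨0, hn⟩⟩
  set k := Finset.univ.sup (fun x : Fin n => (f x).val - x.val) with hkdef
  have hk_ub : ∀ x : Fin n, (f x).val - x.val ≤ k := by
    intro x; rw [hkdef]; exact Finset.le_sup (f := fun x : Fin n => (f x).val - x.val) (Finset.mem_univ x)
  by_cases hk0 : k = 0
  · -- f is below the identity
    have hle : ∀ x, (f x).val ≤ x.val := by intro x; have := hk_ub x; omega
    obtain ⟨w, hw⟩ := realize_le_id n hn _ f hf hle (le_refl _)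
    refine ⟨⟨0, by omega⟩ :: w, by simp, fun q => ?_⟩
    rw [evalFrom_cons]
    have h0 : stepF n q ⟨0, by omega⟩ = q := by unfold stepF; rw [if_pos rfl]
    rw [h0]; exact hw q
  · have hk1 : 1 ≤ k := Nat.one_le_iff_ne_zero.mpr hk0
    obtain ⟨z, -, hz⟩ := Finset.exists_mem_eq_sup Finset.univ
      (Finset.univ_nonempty) (fun x : Fin n => (f x).val - x.val)
    rw [← hkdef] at hz
    -- minimum preimage function
    set mi : Fin n → Fin n := fun v =>
      if h : (Finset.univ.filter (fun y => f y = v)).Nonempty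
      then (Finset.univ.filter (fun y => f y = v)).min' h else ⟨0, hn⟩ with hmidef
    have mi_le : ∀ y : Fin n, mi (f y) ≤ y := by
      intro y
      have hne : (Finset.univ.filter (fun x => f x = f y)).Nonempty := ⟨y, by simp⟩
      simp only [hmidef]
      rw [dif_pos hne]
      exact Finset.min'_le _ y (by simp)
    have mi_eq : ∀ v : Fin n, v ∈ Finset.univ.image f → f (mi v) = v := by
      intro v hv
      obtain ⟨y, -, hy⟩ := Finset.mem_image.mp hv
      have hne : (Finset.univ.filter (fun x => f x = v)).Nonempty := ⟨y, by simp [hy]⟩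
      simp only [hmidef]
      rw [dif_pos hne]
      have := Finset.min'_mem _ hne
      simpa using this
    have mi_lt : ∀ (x : Fin n) (v : Fin n), v ∈ Finset.univ.image f → v < f x → mi v < x := by
      intro x v hv hlt
      by_contra h
      push_neg at h
      have : f x ≤ f (mi v) := hf h
      rw [mi_eq v hv] at this
      exact absurd hlt (not_lt.mpr this)
    have mi_inj : ∀ (s : Finset (Fin n)), (∀ v ∈ s, v ∈ Finset.univ.image f) →
        Set.InjOn mi s := by
      intro s hs v1 h1 v2 h2 he
      rw [← mi_eq v1 (hs v1 h1), ← mi_eq v2 (hs v2 h2), he]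
    -- rank function
    set rk : Fin n → ℕ := fun x => ((Finset.univ.image f).filter (fun v => v < f x)).card
      with hrkdef
    have rk_le : ∀ x : Fin n, rk x ≤ x.val := by
      intro x
      have h : rk x ≤ (Finset.Iio x).card := by
        apply Finset.card_le_card_of_injOn mi
        · intro v hv
          have hm := Finset.mem_filter.mp hv
          exact Finset.mem_Iio.mpr (mi_lt x v hm.1 hm.2)
        · exact mi_inj _ (fun v hv => (Finset.mem_filter.mp hv).1)
      simpa [Fin.card_Iio] using h
    have rk_mono : ∀ x y : Fin n, f x ≤ f y → rk x ≤ rk y := by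
      intro x y hxy
      apply Finset.card_le_card
      intro v hv
      have hm := Finset.mem_filter.mp hv
      exact Finset.mem_filter.mpr ⟨hm.1, lt_of_lt_of_le hm.2 hxy⟩
    have rk_lt : ∀ x y : Fin n, f x < f y → rk x < rk y := by
      intro x y hxy
      apply Finset.card_lt_card
      rw [Finset.ssubset_iff_of_subset]
      · refine ⟨f x, Finset.mem_filter.mpr ⟨Finset.mem_image_of_mem f (Finset.mem_univ x), hxy⟩, ?_⟩
        intro hc
        exact absurd (Finset.mem_filter.mp hc).2 (lt_irrefl _)
      · intro v hv
        have hm := Finset.mem_filter.mp hv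
        exact Finset.mem_filter.mpr ⟨hm.1, lt_trans hm.2 hxy⟩
    -- the map a
    set aF : Fin n → Fin n := fun x =>
      ⟨max ((f x).val - k) (rk x), by
        have h1 := rk_le x
        have h2 := x.isLt
        have h3 := (f x).isLt
        omega⟩ with haFdef
    have aF_le : ∀ x, (aF x).val ≤ x.val := by
      intro x
      have h1 := rk_le x
      have h2 := hk_ub x
      simp only [haFdef, Fin.val_mk]
      omega
    have aF_mono : Monotone aF := by
      intro x y hxy
      have h1 : (f x).val ≤ (f y).val := hf hxy
      have h2 := rk_mono x y (hf hxy)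
      simp only [haFdef, Fin.mk_le_mk, Fin.le_def, Fin.val_mk]
      omega
    -- the intermediate value
    set mN : Fin n → ℕ := fun x => min ((aF x).val + k) (n - 1) with hmNdef
    have hm_lt : ∀ x, mN x < n := by
      intro x; simp only [hmNdef]; omega
    have hfm : ∀ x, (f x).val ≤ mN x := by
      intro x
      have h1 := (f x).isLt
      simp only [hmNdef, haFdef, Fin.val_mk]
      omega
    -- the clamp bound
    have hclamp : ∀ x : Fin n, (∃ y, f x < f y) → rk x + k ≤ n - 2 := by
      rintro x ⟨y, hy⟩
      have hyv : (f x).val < (f y).val := hy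
      have hfx_top : (f x).val ≤ n - 2 := by have := (f y).isLt; omega
      have hfz_lt := (f z).isLt
      rcases lt_or_ge (rk x) z.val with h1 | h2
      · omega
      · rcases lt_trichotomy (f z) (f x) with hzx | hzx | hzx
        · -- f z < f x : counting argument
          have hzxv : (f z).val < (f x).val := hzx
          have hsub : ((Finset.univ.image f).filter (fun v => v < f x)) ⊆
              ((Finset.univ.image f).filter (fun v => v ≤ f z)) ∪ (Finset.Ioo (f z) (f x)) := by
            intro v hv
            have hm := Finset.mem_filter.mp hv
            rcases le_or_gt v (f z) with h | h
            · exact Finset.mem_union_left _ (Finset.mem_filter.mpr ⟨hm.1, h⟩)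
            · exact Finset.mem_union_right _ (Finset.mem_Ioo.mpr ⟨h, hm.2⟩)
          have hcard1 : ((Finset.univ.image f).filter (fun v => v ≤ f z)).card ≤ z.val + 1 := by
            have h : ((Finset.univ.image f).filter (fun v => v ≤ f z)).card ≤ (Finset.Iic z).card := by
              apply Finset.card_le_card_of_injOn mi
              · intro v hv
                have hm := Finset.mem_filter.mp hv
                refine Finset.mem_Iic.mpr ?_
                by_contra hc
                push_neg at hc
                have h3 : f z ≤ f (mi v) := hf (le_of_lt hc)
                rw [mi_eq v hm.1] at h3
                have hveq : v = f z := le_antisymm hm.2 h3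
                have h4 := mi_le z
                rw [← hveq] at h4
                exact absurd h4 (not_le.mpr hc)
              · exact mi_inj _ (fun v hv => (Finset.mem_filter.mp hv).1)
            simpa [Fin.card_Iic] using h
          have hcard2 : (Finset.Ioo (f z) (f x)).card = (f x).val - (f z).val - 1 :=
            Fin.card_Ioo _ _
          have hrk : rk x ≤ z.val + 1 + ((f x).val - (f z).val - 1) := by
            calc rk x ≤ (((Finset.univ.image f).filter (fun v => v ≤ f z))
                  ∪ (Finset.Ioo (f z) (f x))).card := Finset.card_le_card hsub
              _ ≤ ((Finset.univ.image f).filter (fun v => v ≤ f z)).card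
                  + (Finset.Ioo (f z) (f x)).card := Finset.card_union_le _ _
              _ ≤ z.val + 1 + ((f x).val - (f z).val - 1) := by rw [hcard2]; omega
          omega
        · -- f z = f x
          have hzxv : (f z).val = (f x).val := congrArg Fin.val hzx
          have hble : rk x ≤ z.val := by
            have h : rk x ≤ (Finset.Iio z).card := by
              apply Finset.card_le_card_of_injOn mi
              · intro v hv
                have hm := Finset.mem_filter.mp hv
                refine Finset.mem_Iio.mpr (mi_lt z v hm.1 ?_)
                rw [hzx]; exact hm.2
              · exact mi_inj _ (fun v hv => (Finset.mem_filter.mp hv).1)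
            simpa [Fin.card_Iio] using h
          omega
        · -- f x < f z : contradiction with z ≤ rk x
          exfalso
          have hW1 : rk x < ((Finset.univ.image f).filter (fun v => v < f z)).card := by
            apply Finset.card_lt_card
            rw [Finset.ssubset_iff_of_subset]
            · refine ⟨f x, Finset.mem_filter.mpr
                ⟨Finset.mem_image_of_mem f (Finset.mem_univ x), hzx⟩, ?_⟩
              intro hc
              exact absurd (Finset.mem_filter.mp hc).2 (lt_irrefl _)
            · intro v hv
              have hm := Finset.mem_filter.mp hv
              exact Finset.mem_filter.mpr ⟨hm.1, lt_trans hm.2 hzx⟩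
          have hW2 : ((Finset.univ.image f).filter (fun v => v < f z)).card ≤ z.val := by
            have h : ((Finset.univ.image f).filter (fun v => v < f z)).card ≤ (Finset.Iio z).card := by
              apply Finset.card_le_card_of_injOn mi
              · intro v hv
                have hm := Finset.mem_filter.mp hv
                exact Finset.mem_Iio.mpr (mi_lt z v hm.1 hm.2)
              · exact mi_inj _ (fun v hv => (Finset.mem_filter.mp hv).1)
            simpa [Fin.card_Iio] using h
          omega
    -- separation
    have hsep : ∀ x y : Fin n, f x < f y → mN x < mN y := by
      intro x y h
      have hv : (f x).val < (f y).val := h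
      have hr := rk_lt x y h
      have hcl := hclamp x ⟨y, h⟩
      have h2 := (f y).isLt
      simp only [hmNdef, haFdef, Fin.val_mk]
      omega
    -- the map b
    have hsup_lt : ∀ v : Fin n,
        (Finset.univ.filter (fun x => mN x ≤ v.val)).sup (fun x => (f x).val) < n := by
      intro v
      have h : (Finset.univ.filter (fun x => mN x ≤ v.val)).sup (fun x => (f x).val) ≤ n - 1 := by
        apply Finset.sup_le
        intro x _
        have := (f x).isLt; omega
      omega
    set bF : Fin n → Fin n := fun v =>
      ⟨(Finset.univ.filter (fun x => mN x ≤ v.val)).sup (fun x => (f x).val), hsup_lt v⟩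
      with hbFdef
    have bF_le : ∀ v, (bF v).val ≤ v.val := by
      intro v
      simp only [hbFdef, Fin.val_mk]
      apply Finset.sup_le
      intro x hx
      exact le_trans (hfm x) (Finset.mem_filter.mp hx).2
    have bF_mono : Monotone bF := by
      intro v v' hvv
      have hvvv : v.val ≤ v'.val := hvv
      show (bF v).val ≤ (bF v').val
      simp only [hbFdef, Fin.val_mk]
      apply Finset.sup_le
      intro x hx
      exact Finset.le_sup (f := fun y : Fin n => (f y).val)
        (Finset.mem_filter.mpr ⟨Finset.mem_univ x, le_trans (Finset.mem_filter.mp hx).2 hvvv⟩)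
    have bF_m : ∀ x : Fin n, bF ⟨mN x, hm_lt x⟩ = f x := by
      intro x
      apply Fin.ext
      simp only [hbFdef, Fin.val_mk]
      apply le_antisymm
      · apply Finset.sup_le
        intro y hy
        have hmy : mN y ≤ mN x := (Finset.mem_filter.mp hy).2
        by_contra hc
        push_neg at hc
        have : f x < f y := hc
        exact absurd hmy (not_le.mpr (hsep x y this))
      · exact Finset.le_sup (f := fun y : Fin n => (f y).val)
          (Finset.mem_filter.mpr ⟨Finset.mem_univ x, le_refl _⟩)
    -- assemble the word
    obtain ⟨wa, hwa⟩ := realize_le_id n hn _ aF aF_mono aF_le (le_refl _)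
    obtain ⟨wb, hwb⟩ := realize_le_id n hn _ bF bF_mono bF_le (le_refl _)
    refine ⟨wa ++ (List.replicate k ⟨n, by omega⟩ ++ wb), ?_, fun q => ?_⟩
    · intro hnil
      rcases List.append_eq_nil_iff.mp hnil with ⟨-, h2⟩
      rcases List.append_eq_nil_iff.mp h2 with ⟨h3, -⟩
      exact hk0 (by simpa using congrArg List.length h3)
    · rw [DFA.evalFrom_of_append, hwa q, DFA.evalFrom_of_append, realize_u_pow, hwb]
      exact bF_m q

lemma gap_lemma {a b : ℕ} (g : Fin a → Fin b) (hg : StrictMono g) :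
    ∀ (d : ℕ) (x y : Fin a), y.val = x.val + d → (g x).val + d ≤ (g y).val := by
  intro d
  induction d with
  | zero =>
    intro x y h
    have hxy : x = y := Fin.ext (by omega)
    rw [hxy]
    omega
  | succ d ih =>
    intro x y h
    have hylt := y.isLt
    have h1 : (⟨y.val - 1, by omega⟩ : Fin a).val = x.val + d := by simp; omega
    have h2 : (⟨y.val - 1, by omega⟩ : Fin a) < y := by simp [Fin.lt_def]; omega
    have h3 := ih x _ h1
    have h4 : (g ⟨y.val - 1, by omega⟩).val < (g y).val := hg h2
    omega

lemma card_monotone_maps (n : ℕ) (hn : 0 < n) :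
    Nat.card {f : Fin n → Fin n | Monotone f} = Nat.choose (2 * n - 1) n := by
  -- the embedding sending f to x ↦ f x + x
  let E : (Fin n → Fin n) → (Fin n → Fin (2 * n - 1)) := fun f x =>
    ⟨(f x).val + x.val, by have := (f x).isLt; have := x.isLt; omega⟩
  have E_strict : ∀ f : Fin n → Fin n, Monotone f → StrictMono (E f) := by
    intro f hf x y hxy
    have h1 : (f x).val ≤ (f y).val := hf (le_of_lt hxy)
    have h2 : x.val < y.val := hxy
    show (E f x).val < (E f y).val
    simp only [E, Fin.val_mk]
    omega
  let F : {f : Fin n → Fin n | Monotone f} → {s : Finset (Fin (2 * n - 1)) // s.card = n} :=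
    fun p => ⟨Finset.univ.image (E p.1), by
      rw [Finset.card_image_of_injective _ (E_strict p.1 p.2).injective, Finset.card_univ,
        Fintype.card_fin]⟩
  have Finj : Function.Injective F := by
    intro p q hpq
    let G : {s : Finset (Fin (2 * n - 1)) // s.card = n} → (Fin n → Fin (2 * n - 1)) :=
      fun s => ⇑(s.1.orderEmbOfFin s.2)
    have e1 := Finset.orderEmbOfFin_unique (F p).2
      (fun x => Finset.mem_image_of_mem _ (Finset.mem_univ x)) (E_strict p.1 p.2)
    have e2 := Finset.orderEmbOfFin_unique (F q).2
      (fun x => Finset.mem_image_of_mem _ (Finset.mem_univ x)) (E_strict q.1 q.2)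
    have hE : E p.1 = E q.1 := e1.trans ((congrArg G hpq).trans e2.symm)
    have : p.1 = q.1 := by
      funext x
      have := congrFun hE x
      have hv : (E p.1 x).val = (E q.1 x).val := congrArg Fin.val this
      simp only [E, Fin.val_mk] at hv
      exact Fin.ext (by omega)
    exact Subtype.ext this
  have Fsurj : Function.Surjective F := by
    rintro ⟨s, hs⟩
    have hnpos : (0:ℕ) < n := hn
    let e := s.orderEmbOfFin hs
    have estrict : StrictMono (⇑e) := e.strictMono
    have hle : ∀ x : Fin n, x.val ≤ (e x).val := by
      intro x
      have := gap_lemma (⇑e) estrict x.val ⟨0, hn⟩ x (by simp)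
      omega
    have hub : ∀ x : Fin n, (e x).val ≤ n - 1 + x.val := by
      intro x
      have hlast := (e ⟨n - 1, by omega⟩).isLt
      have hx := x.isLt
      have := gap_lemma (⇑e) estrict ((n - 1) - x.val) x ⟨n - 1, by omega⟩ (by simp; omega)
      omega
    have hfbound : ∀ x : Fin n, (e x).val - x.val < n := by
      intro x
      have := hub x; have := x.isLt; omega
    let f : Fin n → Fin n := fun x => ⟨(e x).val - x.val, hfbound x⟩
    have hmono : Monotone f := by
      intro x y hxy
      have hxyv : x.val ≤ y.val := hxy
      have h := gap_lemma (⇑e) estrict (y.val - x.val) x y (by omega)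
      show (f x).val ≤ (f y).val
      simp only [f, Fin.val_mk]
      have := hle x
      omega
    refine ⟨⟨f, hmono⟩, Subtype.ext ?_⟩
    show Finset.univ.image (E f) = s
    have hEf : ∀ x, E f x = e x := by
      intro x
      apply Fin.ext
      simp only [E, f, Fin.val_mk]
      have := hle x
      omega
    have hsub2 : Finset.univ.image (E f) ⊆ s := by
      intro v hv
      obtain ⟨x, -, hx⟩ := Finset.mem_image.mp hv
      rw [← hx, hEf x]
      exact Finset.orderEmbOfFin_mem s hs x
    refine Finset.eq_of_subset_of_card_le hsub2 ?_
    rw [Finset.card_image_of_injective _ (E_strict f hmono).injective, Finset.card_univ,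
      Fintype.card_fin, hs]
  have h1 : Nat.card {f : Fin n → Fin n | Monotone f}
      = Nat.card {s : Finset (Fin (2 * n - 1)) // s.card = n} :=
    Nat.card_eq_of_bijective F ⟨Finj, Fsurj⟩
  rw [h1, Nat.card_eq_fintype_card, Fintype.card_finset_len, Fintype.card_fin]

end MonoDFA

/-- For every `n ≥ 1` there is a DFA over an alphabet of `n+1` letters with state
set `Fin n` that is accessible (every state reachable from the start state),
reduced (distinct states are distinguishable), all of whose word transformations
are monotonic, and whose transition semigroup (transformations induced by
non-empty words) has exactly `C(2n-1, n)` elements. -/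
theorem exists_monotonic_dfa_max_syntactic_complexity (n : ℕ) (hn : 1 ≤ n) :
    ∃ M : DFA (Fin (n + 1)) (Fin n),
      (∀ q : Fin n, ∃ w : List (Fin (n + 1)), M.evalFrom M.start w = q) ∧
      (∀ p q : Fin n, p ≠ q → ∃ w : List (Fin (n + 1)),
        Xor' (M.evalFrom p w ∈ M.accept) (M.evalFrom q w ∈ M.accept)) ∧
      (∀ w : List (Fin (n + 1)), Monotone (fun q => M.evalFrom q w)) ∧
      Nat.card {f : Fin n → Fin n |
          ∃ w : List (Fin (n + 1)), w ≠ [] ∧ f = fun q => M.evalFrom q w} =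
        Nat.choose (2 * n - 1) n := by
  have hn' : 0 < n := hn
  refine ⟨MonoDFA.M n hn', ?_, ?_, ?_, ?_⟩
  · -- accessibility
    intro q
    obtain ⟨w, -, hw⟩ := MonoDFA.realize_of_monotone n hn' (fun _ => q) monotone_const
    exact ⟨w, hw _⟩
  · -- distinguishability
    intro p q hpq
    have haux : ∀ p q : Fin n, p < q → ∃ w : List (Fin (n + 1)),
        ((MonoDFA.M n hn').evalFrom p w ∈ (MonoDFA.M n hn').accept) ∧
        ¬ ((MonoDFA.M n hn').evalFrom q w ∈ (MonoDFA.M n hn').accept) := by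
      intro p q hlt
      have h2n : 1 < n := by
        have := q.isLt
        have : p.val < q.val := hlt
        omega
      have hmono : Monotone (fun x : Fin n => if x ≤ p then (⟨0, hn'⟩ : Fin n) else ⟨1, h2n⟩) := by
        intro x y hxy
        by_cases h1 : x ≤ p <;> by_cases h2 : y ≤ p
        · simp [h1, h2]
        · simp [h1, h2, Fin.mk_le_mk]
        · exact absurd (le_trans hxy h2) h1
        · simp [h1, h2]
      obtain ⟨w, -, hw⟩ := MonoDFA.realize_of_monotone n hn' _ hmono
      refine ⟨w, ?_, ?_⟩
      · rw [hw p]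
        simp [MonoDFA.M]
      · rw [hw q]
        have : ¬ q ≤ p := not_le.mpr hlt
        simp [MonoDFA.M, this]
    rcases Ne.lt_or_gt hpq with h | h
    · obtain ⟨w, h1, h2⟩ := haux p q h
      exact ⟨w, Or.inl ⟨h1, h2⟩⟩
    · obtain ⟨w, h1, h2⟩ := haux q p h
      exact ⟨w, Or.inr ⟨h1, h2⟩⟩
  · -- monotonicity
    exact fun w => MonoDFA.eval_mono n hn' w
  · -- cardinality of the transition semigroup
    have hset : {f : Fin n → Fin n |
        ∃ w : List (Fin (n + 1)), w ≠ [] ∧ f = fun q => (MonoDFA.M n hn').evalFrom q w} =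
        {f : Fin n → Fin n | Monotone f} := by
      ext f
      constructor
      · rintro ⟨w, -, rfl⟩
        exact MonoDFA.eval_mono n hn' w
      · intro hf
        obtain ⟨w, hw, hev⟩ := MonoDFA.realize_of_monotone n hn' f hf
        exact ⟨w, hw, (funext hev).symm⟩
    rw [hset]
    exact MonoDFA.card_monotone_maps n hn'
end
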